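/- arXiv:2209.00004 — 8 statements merged into one kernel-verified Lean document; each statement's English description precedes it below -/
import Mathlib

section
/- Let 0 < δ < 1 and 0 < ε < δ/4. Then the relaxed truncation map 𝒢_{2δ,ε} : ℝ^k → ℝ^k is Lipschitz with constant c† := 1 + 32/(3√7); that is, |𝒢_{2δ,ε}(ξ₁) − 𝒢_{2δ,ε}(ξ₂)| ≤ (1 + 32/(3√7))·|ξ₁ − ξ₂| for all ξ₁, ξ₂ ∈ ℝ^k. -/
/-!
Write `𝒢(ξ) = φ(|ξ|) ξ/|ξ|` with `φ(r) = (√(ε² + r²) − 2δ)₊`. The profile `φ` is 1-Lipschitz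
with `φ(0) = 0` (as `ε < 2δ`), so `a(ξ) := φ(|ξ|)/|ξ|` lies in `[-1, 1]`, and
`𝒢(ξ₁) − 𝒢(ξ₂) = a(ξ₁)(ξ₁ − ξ₂) + (a(ξ₁) − a(ξ₂)) ξ₂`, whose second term has norm
`|a(ξ₁)(|ξ₂| − |ξ₁|) + φ(|ξ₁|) − φ(|ξ₂|)| ≤ 2|ξ₁ − ξ₂|`. This gives the constant
`3 ≤ 1 + 32/(3√7)`.
-/

theorem sqrt_add_sq_le_sqrt_add_sq_add_abs_sub {c : ℝ} (hc : 0 ≤ c) (r s : ℝ) :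
    √(c + r ^ 2) ≤ √(c + s ^ 2) + |r - s| := by
  have hs : |s| ≤ √(c + s ^ 2) := Real.abs_le_sqrt (by nlinarith)
  have hs_sq : √(c + s ^ 2) ^ 2 = c + s ^ 2 := Real.sq_sqrt (by positivity)
  rw [Real.sqrt_le_iff]
  refine ⟨by positivity, ?_⟩
  have hcross : s * (r - s) ≤ √(c + s ^ 2) * |r - s| := by
    calc s * (r - s) ≤ |s| * |r - s| := by rw [← abs_mul]; exact le_abs_self _
      _ ≤ √(c + s ^ 2) * |r - s| := by gcongr
  nlinarith [sq_abs (r - s)]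

theorem lipschitzWith_sqrt_add_sq_sub {c : ℝ} (hc : 0 ≤ c) (t : ℝ) :
    LipschitzWith 1 fun r : ℝ => √(c + r ^ 2) - t :=
  LipschitzWith.of_le_add fun r s => by
    linarith [sqrt_add_sq_le_sqrt_add_sq_add_abs_sub hc r s, Real.dist_eq r s]

theorem LipschitzWith.radial {E : Type*} [NormedAddCommGroup E] [NormedSpace ℝ E] {φ : ℝ → ℝ}
    (hφ : LipschitzWith 1 φ) (hφ0 : φ 0 = 0) :
    LipschitzWith 3 fun x : E => φ ‖x‖ • (‖x‖⁻¹ • x) := by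
  have hφ_sub (r s : ℝ) : |φ r - φ s| ≤ |r - s| := by
    simpa [Real.dist_eq] using hφ.dist_le_mul r s
  set a : E → ℝ := fun x => φ ‖x‖ * ‖x‖⁻¹
  have ha_mul (x : E) : a x * ‖x‖ = φ ‖x‖ := by
    rcases eq_or_ne ‖x‖ 0 with hx | hx
    · simp [a, hx, hφ0]
    · simp [a, hx]
  have ha_abs (x : E) : |a x| ≤ 1 := by
    have : |φ ‖x‖| ≤ ‖x‖ := by simpa [hφ0] using hφ_sub ‖x‖ 0
    simpa [a, ← div_eq_mul_inv, abs_div] using div_le_one_of_le₀ this (norm_nonneg x)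
  refine LipschitzWith.of_dist_le_mul fun x y => ?_
  simp only [dist_eq_norm, NNReal.coe_ofNat]
  have hdecomp : φ ‖x‖ • (‖x‖⁻¹ • x) - φ ‖y‖ • (‖y‖⁻¹ • y) = a x • (x - y) + (a x - a y) • y := by
    simp only [a, smul_smul]
    module
  have hnorm := abs_norm_sub_norm_le x y
  have hsecond : ‖(a x - a y) • y‖ ≤ 2 * ‖x - y‖ := by
    have hsplit : (a x - a y) * ‖y‖ = a x * (‖y‖ - ‖x‖) + (φ ‖x‖ - φ ‖y‖) := by
      linear_combination ha_mul x - ha_mul y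
    calc ‖(a x - a y) • y‖ = |(a x - a y) * ‖y‖| := by
          rw [norm_smul, Real.norm_eq_abs, abs_mul, abs_norm]
      _ ≤ |a x| * |‖y‖ - ‖x‖| + |‖x‖ - ‖y‖| := by
          rw [hsplit, ← abs_mul]
          exact (abs_add_le _ _).trans (add_le_add_right (hφ_sub _ _) _)
      _ ≤ 1 * ‖x - y‖ + ‖x - y‖ := by
          rw [abs_sub_comm ‖y‖]
          gcongr
          exact ha_abs x
      _ = 2 * ‖x - y‖ := by ring
  calc ‖φ ‖x‖ • (‖x‖⁻¹ • x) - φ ‖y‖ • (‖y‖⁻¹ • y)‖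
      ≤ ‖a x • (x - y)‖ + ‖(a x - a y) • y‖ := hdecomp ▸ norm_add_le _ _
    _ ≤ 1 * ‖x - y‖ + 2 * ‖x - y‖ := by
        rw [norm_smul, Real.norm_eq_abs]
        gcongr
        exact ha_abs x
    _ = 3 * ‖x - y‖ := by ring

theorem three_le_one_add_div_sqrt_seven : (3 : ℝ) ≤ 1 + 32 / (3 * √7) := by
  have h7 : √7 ^ 2 = 7 := Real.sq_sqrt (by norm_num)
  have : (2 : ℝ) ≤ 32 / (3 * √7) := by
    rw [le_div_iff₀ (by positivity)]
    nlinarith [sq_nonneg (√7 - 3)]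
  linarith

theorem stmt_0_general (k : ℕ) (δ ε : ℝ)
    (hε0 : 0 < ε) (hε : ε < δ / 4) :
    ∀ ξ₁ ξ₂ : EuclideanSpace ℝ (Fin k),
      ‖(max (Real.sqrt (ε ^ 2 + ‖ξ₁‖ ^ 2) - 2 * δ) 0) • (‖ξ₁‖⁻¹ • ξ₁)
          - (max (Real.sqrt (ε ^ 2 + ‖ξ₂‖ ^ 2) - 2 * δ) 0) • (‖ξ₂‖⁻¹ • ξ₂)‖
        ≤ (1 + 32 / (3 * Real.sqrt 7)) * ‖ξ₁ - ξ₂‖ := by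
  intro ξ₁ ξ₂
  have hprofile : LipschitzWith 1 fun r : ℝ => max (√(ε ^ 2 + r ^ 2) - 2 * δ) 0 :=
    (lipschitzWith_sqrt_add_sq_sub (sq_nonneg ε) (2 * δ)).max_const 0
  have hprofile0 : max (√(ε ^ 2 + 0 ^ 2) - 2 * δ) 0 = 0 := by
    rw [zero_pow two_ne_zero, add_zero, Real.sqrt_sq hε0.le]
    exact max_eq_right (by linarith)
  calc _ ≤ 3 * ‖ξ₁ - ξ₂‖ :=
        (hprofile.radial (E := EuclideanSpace ℝ (Fin k)) hprofile0).norm_sub_le ξ₁ ξ₂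
    _ ≤ _ := by gcongr; exact three_le_one_add_div_sqrt_seven

/-- Lipschitz continuity of the relaxed truncation map `𝒢_{2δ,ε}` with constant
`1 + 32/(3√7)`, where `𝒢_{2δ,ε}(ξ) = (√(ε² + |ξ|²) − 2δ)₊ · ξ/|ξ|` (and `= 0` at `ξ = 0`). -/
theorem stmt_0 (k : ℕ) (hk : 1 ≤ k) (δ ε : ℝ) (hδ0 : 0 < δ) (hδ1 : δ < 1)
    (hε0 : 0 < ε) (hε : ε < δ / 4) :
    ∀ ξ₁ ξ₂ : EuclideanSpace ℝ (Fin k),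
      ‖(max (Real.sqrt (ε ^ 2 + ‖ξ₁‖ ^ 2) - 2 * δ) 0) • (‖ξ₁‖⁻¹ • ξ₁)
          - (max (Real.sqrt (ε ^ 2 + ‖ξ₂‖ ^ 2) - 2 * δ) 0) • (‖ξ₂‖⁻¹ • ξ₂)‖
        ≤ (1 + 32 / (3 * Real.sqrt 7)) * ‖ξ₁ - ξ₂‖ :=
  stmt_0_general k δ ε hε0 hε
end

section
/- Let 0 < δ < 1 and M > δ. There exists a constant C₁ > 0, depending only on b, p, γ, Γ, δ and M, such that for every g satisfying (G1)–(G3), every ε with 0 < ε < δ/4, and all ξ₀, ξ₁ ∈ ℝ^k with δ ≤ |ξ₀| ≤ M and |ξ₁| ≤ M, one has ⟨A_ε(ξ₁) − A_ε(ξ₀), ξ₁ − ξ₀⟩ ≥ C₁·|ξ₁ − ξ₀|². -/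
/-!
Write `A_ε(ξ) = a(ε² + ‖ξ‖²) ξ` with `a(s) = b/√s + g'(s)`, and put `η = ξ₁ - ξ₀`,
`ξ(t) = ξ₀ + tη`. The function `t ↦ ⟪A_ε(ξ(t)), η⟫` has derivative
`2a'(σ)⟪ξ(t), η⟫² + a(σ)‖η‖²` with `σ = ε² + ‖ξ(t)‖²`. By Cauchy–Schwarz the `b`-part of this
is nonnegative, and (G3) with `τ = ε²` bounds the `g`-part below by `γσ^(p/2-1)‖η‖²`.
For `0 ≤ t ≤ δ/(4M)` we have `δ/2 ≤ ‖ξ(t)‖ ≤ 3M`, so `σ^(p/2-1)` is bounded below uniformly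
there, and the mean value inequality on `[0, δ/(4M)]` and on `[δ/(4M), 1]` gives the estimate.
-/

open Real RealInnerProductSpace Set

theorem mul_sub_le_sub_of_hasDerivAt {F F' : ℝ → ℝ} {a T b c : ℝ}
    (hF : ∀ t, HasDerivAt F (F' t) t) (haT : a ≤ T) (hTb : T ≤ b)
    (hc : ∀ t ∈ Icc a T, c ≤ F' t) (hnonneg : ∀ t ∈ Icc T b, 0 ≤ F' t) :
    c * (T - a) ≤ F b - F a := by
  have hFcont : Continuous F := continuous_iff_continuousAt.2 fun t => (hF t).continuousAt
  have hslope : ∀ {x y C : ℝ}, x ≤ y → (∀ t ∈ Icc x y, C ≤ F' t) → C * (y - x) ≤ F y - F x := by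
    intro x y C hxy hC
    refine (convex_Icc x y).mul_sub_le_image_sub_of_le_deriv hFcont.continuousOn
      (fun t _ => (hF t).differentiableAt.differentiableWithinAt) (fun t ht => ?_)
      x (left_mem_Icc.2 hxy) y (right_mem_Icc.2 hxy) hxy
    rw [(hF t).deriv]
    exact hC t (interior_subset ht)
  have h₁ := hslope haT hc
  have h₂ := hslope hTb hnonneg
  linarith

theorem hasDerivAt_div_sqrt (b : ℝ) {s : ℝ} (hs : 0 < s) :
    HasDerivAt (fun s => b / √s) (-(b / (2 * s * √s))) s := by
  have hsqrt : √s ≠ 0 := (sqrt_pos.2 hs).ne'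
  refine ((hasDerivAt_const s b).div (hasDerivAt_sqrt hs.ne') hsqrt).congr_deriv ?_
  field_simp
  rw [sq_sqrt hs.le]
  ring

theorem div_sqrt_form_nonneg {b σ u n : ℝ} (hb : 0 ≤ b) (hσ : 0 < σ) (hu : u ^ 2 ≤ σ * n) :
    0 ≤ 2 * -(b / (2 * σ * √σ)) * u ^ 2 + b / √σ * n := by
  have hsqrt := sqrt_pos.2 hσ
  have hfactor : 2 * -(b / (2 * σ * √σ)) * u ^ 2 + b / √σ * n
      = b / (σ * √σ) * (σ * n - u ^ 2) := by
    field_simp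
    ring
  rw [hfactor]
  exact mul_nonneg (by positivity) (by linarith)

theorem mul_le_form_of_le_add_min {g₁ g₂ q u n L : ℝ} (hn : 0 ≤ n) (hu : u ^ 2 ≤ q * n)
    (hL : L ≤ g₁ + 2 * q * min g₂ 0) : L * n ≤ 2 * g₂ * u ^ 2 + g₁ * n := by
  nlinarith [mul_nonneg (sub_nonneg.2 (min_le_left g₂ 0)) (sq_nonneg u),
    mul_nonneg (neg_nonneg.2 (min_le_right g₂ 0)) (sub_nonneg.2 hu),
    mul_le_mul_of_nonneg_right hL hn]

theorem min_rpow_le_rpow_of_mem_Icc {lo hi s : ℝ} (e : ℝ) (hlo : 0 < lo) (hs : s ∈ Icc lo hi) :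
    min (lo ^ e) (hi ^ e) ≤ s ^ e := by
  rcases le_total 0 e with he | he
  · exact (min_le_left _ _).trans (rpow_le_rpow hlo.le hs.1 he)
  · exact (min_le_right _ _).trans (rpow_le_rpow_of_nonpos (hlo.trans_le hs.1) hs.2 he)

section InnerProductSpace

variable {E : Type*} [NormedAddCommGroup E] [InnerProductSpace ℝ E]

theorem hasDerivAt_inner_smul_segment {a a' : ℝ → ℝ} {ε : ℝ} (hε : ε ≠ 0)
    (ha : ∀ s, 0 < s → HasDerivAt a (a' s) s) (x v : E) (t : ℝ) :
    HasDerivAt (fun t : ℝ => ⟪a (ε ^ 2 + ‖x + t • v‖ ^ 2) • (x + t • v), v⟫)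
      (2 * a' (ε ^ 2 + ‖x + t • v‖ ^ 2) * ⟪x + t • v, v⟫ ^ 2
        + a (ε ^ 2 + ‖x + t • v‖ ^ 2) * ‖v‖ ^ 2) t := by
  have hy : HasDerivAt (fun t : ℝ => x + t • v) v t := by
    simpa using ((hasDerivAt_id t).smul_const v).const_add x
  have hσ := hy.norm_sq.const_add (ε ^ 2)
  have haσ := (ha _ (by positivity)).comp t hσ
  have hu : HasDerivAt (fun t : ℝ => ⟪x + t • v, v⟫) (‖v‖ ^ 2) t := by
    simpa using hy.inner ℝ (hasDerivAt_const (x := t) v)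
  simp only [real_inner_smul_left]
  refine (haσ.mul hu).congr_deriv ?_
  simp only [Function.comp_apply]
  ring


theorem rpow_mul_le_radial_form {b γ e ε : ℝ} {g' g'' : ℝ → ℝ} (hb : 0 ≤ b) (hε : ε ≠ 0)
    (hε1 : ε ^ 2 < 1)
    (hG3 : ∀ σ : ℝ, 0 ≤ σ → ∀ τ : ℝ, 0 < τ → τ < 1 →
      γ * (σ + τ) ^ e ≤ g' (σ + τ) + 2 * σ * min (g'' (σ + τ)) 0)
    (x v : E) :
    γ * (ε ^ 2 + ‖x‖ ^ 2) ^ e * ‖v‖ ^ 2 ≤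
      2 * (-(b / (2 * (ε ^ 2 + ‖x‖ ^ 2) * √(ε ^ 2 + ‖x‖ ^ 2))) + g'' (ε ^ 2 + ‖x‖ ^ 2))
          * ⟪x, v⟫ ^ 2
        + (b / √(ε ^ 2 + ‖x‖ ^ 2) + g' (ε ^ 2 + ‖x‖ ^ 2)) * ‖v‖ ^ 2 := by
  have hCS : ⟪x, v⟫ ^ 2 ≤ ‖x‖ ^ 2 * ‖v‖ ^ 2 := by
    rw [← sq_abs, ← mul_pow]
    exact pow_le_pow_left₀ (abs_nonneg _) (abs_real_inner_le_norm x v) 2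
  have hG := hG3 (‖x‖ ^ 2) (by positivity) (ε ^ 2) (by positivity) hε1
  rw [add_comm] at hG
  have h₁ := div_sqrt_form_nonneg hb (by positivity : 0 < ε ^ 2 + ‖x‖ ^ 2)
    (hCS.trans (by gcongr; nlinarith [sq_nonneg ε]))
  have h₂ := mul_le_form_of_le_add_min (sq_nonneg ‖v‖) hCS hG
  linarith

theorem min_rpow_le_rpow_norm_add_smul {δ M ε : ℝ} (e : ℝ) (hδ : 0 < δ) (hε1 : ε ^ 2 ≤ 1)
    {x v : E} (hxδ : δ ≤ ‖x‖) (hxM : ‖x‖ ≤ M) (hv : ‖v‖ ≤ 2 * M) {t : ℝ}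
    (ht : t ∈ Icc 0 (δ / (4 * M))) :
    min ((δ ^ 2 / 4) ^ e) ((1 + 9 * M ^ 2) ^ e) ≤ (ε ^ 2 + ‖x + t • v‖ ^ 2) ^ e := by
  have hM : 0 < M := hδ.trans_le (hxδ.trans hxM)
  have ht1 : t ≤ 1 := ht.2.trans ((div_le_one (by positivity)).2 (by linarith))
  have htv : ‖t • v‖ ≤ t * (2 * M) := by
    rw [norm_smul, norm_of_nonneg ht.1]
    exact mul_le_mul_of_nonneg_left hv ht.1
  have hsmall : t * (2 * M) ≤ δ / 2 := by
    calc t * (2 * M) ≤ δ / (4 * M) * (2 * M) := by gcongr; exact ht.2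
      _ = δ / 2 := by field_simp; ring
  have hlower : δ / 2 ≤ ‖x + t • v‖ := by
    have := norm_sub_norm_le x (-(t • v))
    rw [sub_neg_eq_add, norm_neg] at this
    linarith
  have hupper : ‖x + t • v‖ ≤ 3 * M := by
    have := norm_add_le x (t • v)
    nlinarith
  refine min_rpow_le_rpow_of_mem_Icc e (by positivity) ⟨?_, ?_⟩
  · nlinarith [sq_nonneg ε]
  · nlinarith [norm_nonneg (x + t • v)]

theorem mul_norm_sub_sq_le_inner_radial_sub {b γ e δ M ε : ℝ} {g' g'' : ℝ → ℝ}
    (hb : 0 ≤ b) (hγ : 0 ≤ γ) (hδ : 0 < δ) (hε : ε ≠ 0) (hε1 : ε ^ 2 < 1)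
    (hg' : ∀ σ : ℝ, 0 < σ → HasDerivAt g' (g'' σ) σ)
    (hG3 : ∀ σ : ℝ, 0 ≤ σ → ∀ τ : ℝ, 0 < τ → τ < 1 →
      γ * (σ + τ) ^ e ≤ g' (σ + τ) + 2 * σ * min (g'' (σ + τ)) 0)
    {ξ₀ ξ₁ : E} (h₀δ : δ ≤ ‖ξ₀‖) (h₀M : ‖ξ₀‖ ≤ M) (h₁M : ‖ξ₁‖ ≤ M) :
    γ * min ((δ ^ 2 / 4) ^ e) ((1 + 9 * M ^ 2) ^ e) * (δ / (4 * M)) * ‖ξ₁ - ξ₀‖ ^ 2 ≤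
      ⟪(b / √(ε ^ 2 + ‖ξ₁‖ ^ 2) + g' (ε ^ 2 + ‖ξ₁‖ ^ 2)) • ξ₁
        - (b / √(ε ^ 2 + ‖ξ₀‖ ^ 2) + g' (ε ^ 2 + ‖ξ₀‖ ^ 2)) • ξ₀, ξ₁ - ξ₀⟫ := by
  set η := ξ₁ - ξ₀
  set c₀ := min ((δ ^ 2 / 4) ^ e) ((1 + 9 * M ^ 2) ^ e)
  have hM : 0 < M := hδ.trans_le (h₀δ.trans h₀M)
  have hT : δ / (4 * M) ≤ 1 := (div_le_one (by positivity)).2 (by linarith)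
  have hη : ‖η‖ ≤ 2 * M := (norm_sub_le ξ₁ ξ₀).trans (by linarith)
  have hF := hasDerivAt_inner_smul_segment hε
    (fun s hs => (hasDerivAt_div_sqrt b hs).add (hg' s hs)) ξ₀ η
  have hF' := fun t : ℝ => rpow_mul_le_radial_form hb hε hε1 hG3 (ξ₀ + t • η) η
  have key := mul_sub_le_sub_of_hasDerivAt (c := γ * c₀ * ‖η‖ ^ 2) hF (by positivity) hT
    (fun t ht => le_trans (by
      gcongr
      exact min_rpow_le_rpow_norm_add_smul e hδ hε1.le h₀δ h₀M hη ht) (hF' t))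
    (fun t _ => le_trans (by positivity) (hF' t))
  simp only [one_smul, zero_smul, add_zero, sub_zero, η, add_sub_cancel, Pi.add_apply,
    ← inner_sub_left] at key
  linarith

end InnerProductSpace

theorem stmt_2_general (k : ℕ) (p b γ Γ δ M : ℝ)
    (hb : 0 < b) (hγ : 0 < γ)
    (hδ0 : 0 < δ) (hδ1 : δ < 1) (hM : δ < M) :
    ∃ C₁ : ℝ, 0 < C₁ ∧
      ∀ g g' g'' : ℝ → ℝ,
        (∀ σ : ℝ, 0 < σ → HasDerivAt g (g' σ) σ) →
        (∀ σ : ℝ, 0 < σ → HasDerivAt g' (g'' σ) σ) →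
        ContinuousOn g'' (Set.Ioi 0) →
        (∀ σ : ℝ, 0 < σ → |g' σ| ≤ Γ * σ ^ (p / 2 - 1)) →
        (∀ σ : ℝ, 0 < σ → |g'' σ| ≤ Γ * σ ^ (p / 2 - 2)) →
        (∀ σ : ℝ, 0 ≤ σ → ∀ τ : ℝ, 0 < τ → τ < 1 →
          γ * (σ + τ) ^ (p / 2 - 1) ≤ g' (σ + τ) + 2 * σ * min (g'' (σ + τ)) 0) →
        ∀ ε : ℝ, 0 < ε → ε < δ / 4 →
          ∀ ξ₀ ξ₁ : EuclideanSpace ℝ (Fin k),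
            δ ≤ ‖ξ₀‖ → ‖ξ₀‖ ≤ M → ‖ξ₁‖ ≤ M →
            C₁ * ‖ξ₁ - ξ₀‖ ^ 2 ≤
              ⟪((b / Real.sqrt (ε ^ 2 + ‖ξ₁‖ ^ 2)) • ξ₁ + g' (ε ^ 2 + ‖ξ₁‖ ^ 2) • ξ₁)
                - ((b / Real.sqrt (ε ^ 2 + ‖ξ₀‖ ^ 2)) • ξ₀ + g' (ε ^ 2 + ‖ξ₀‖ ^ 2) • ξ₀),
                ξ₁ - ξ₀⟫ := by
  have hM0 : 0 < M := hδ0.trans hM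
  refine ⟨γ * min ((δ ^ 2 / 4) ^ (p / 2 - 1)) ((1 + 9 * M ^ 2) ^ (p / 2 - 1)) * (δ / (4 * M)),
    by positivity, ?_⟩
  intro g g' g'' _ hg' _ _ _ hG3 ε hε hεδ ξ₀ ξ₁ h₀δ h₀M h₁M
  have hε1 : ε ^ 2 < 1 := by nlinarith
  simp only [← add_smul]
  exact mul_norm_sub_sq_le_inner_radial_sub hb.le hγ.le hδ0 hε.ne' hε1 hg' hG3 h₀δ h₀M h₁M

/-- Monotonicity estimate: there exists `C₁ > 0`, depending only on `b, p, γ, Γ, δ, M`,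
such that for every `g` satisfying (G1)–(G3), every `0 < ε < δ/4`, and all `ξ₀, ξ₁`
with `δ ≤ |ξ₀| ≤ M`, `|ξ₁| ≤ M`, one has
`⟨A_ε(ξ₁) − A_ε(ξ₀), ξ₁ − ξ₀⟩ ≥ C₁ |ξ₁ − ξ₀|²`, where
`A_ε(ξ) = b ξ/√(ε²+|ξ|²) + g'(ε²+|ξ|²) ξ`. -/
theorem stmt_2 (k : ℕ) (hk : 1 ≤ k) (p b γ Γ δ M : ℝ)
    (hp : 1 < p) (hb : 0 < b) (hγ : 0 < γ) (hγΓ : γ ≤ Γ)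
    (hδ0 : 0 < δ) (hδ1 : δ < 1) (hM : δ < M) :
    ∃ C₁ : ℝ, 0 < C₁ ∧
      ∀ g g' g'' : ℝ → ℝ,
        (∀ σ : ℝ, 0 < σ → HasDerivAt g (g' σ) σ) →
        (∀ σ : ℝ, 0 < σ → HasDerivAt g' (g'' σ) σ) →
        ContinuousOn g'' (Set.Ioi 0) →
        (∀ σ : ℝ, 0 < σ → |g' σ| ≤ Γ * σ ^ (p / 2 - 1)) →
        (∀ σ : ℝ, 0 < σ → |g'' σ| ≤ Γ * σ ^ (p / 2 - 2)) →
        (∀ σ : ℝ, 0 ≤ σ → ∀ τ : ℝ, 0 < τ → τ < 1 →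
          γ * (σ + τ) ^ (p / 2 - 1) ≤ g' (σ + τ) + 2 * σ * min (g'' (σ + τ)) 0) →
        ∀ ε : ℝ, 0 < ε → ε < δ / 4 →
          ∀ ξ₀ ξ₁ : EuclideanSpace ℝ (Fin k),
            δ ≤ ‖ξ₀‖ → ‖ξ₀‖ ≤ M → ‖ξ₁‖ ≤ M →
            C₁ * ‖ξ₁ - ξ₀‖ ^ 2 ≤
              ⟪((b / Real.sqrt (ε ^ 2 + ‖ξ₁‖ ^ 2)) • ξ₁ + g' (ε ^ 2 + ‖ξ₁‖ ^ 2) • ξ₁)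
                - ((b / Real.sqrt (ε ^ 2 + ‖ξ₀‖ ^ 2)) • ξ₀ + g' (ε ^ 2 + ‖ξ₀‖ ^ 2) • ξ₀),
                ξ₁ - ξ₀⟫ :=
  stmt_2_general k p b γ Γ δ M hb hγ hδ0 hδ1 hM
end

section
/- Let 0 < δ < 1 and M > δ. There exists a constant C₂ > 0, depending only on b, p, γ, Γ, δ and M, such that for every g satisfying (G1)–(G3), every ε with 0 < ε < δ/4, and all ξ₀, ξ₁ ∈ ℝ^k with δ ≤ |ξ₀| ≤ M and |ξ₁| ≤ M, one has |A_ε(ξ₁) − A_ε(ξ₀)| ≤ C₂·|ξ₁ − ξ₀|. -/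
/-!
Write `A_ε(ξ) = φ(ε² + |ξ|²) ξ` with `φ = radialCoeff b g'`, `φ(σ) = b / √σ + g'(σ)`.
If `|ξ₁ - ξ₀| ≥ δ/2`, the bound `|A_ε(ξ)| ≤ b + Γ (δ²/4 + M²)^((p-1)/2)` on the ball of radius `M`
(here `p > 1` enters) gives the estimate with constant `4/δ` times that bound. Otherwise
`|ξ₁| ≥ δ/2`, so both values `σᵢ = ε² + |ξᵢ|²` lie in `[δ²/4, δ²/4 + M²]`, where (G1) and (G2)
make `φ` bounded and Lipschitz; then `A_ε(ξ₁) - A_ε(ξ₀) = φ(σ₁)(ξ₁ - ξ₀) + (φ(σ₁) - φ(σ₀)) ξ₀`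
and `|σ₁ - σ₀| ≤ 2M |ξ₁ - ξ₀|`.
-/

open Real Set

lemma rpow_le_rpow_add_rpow_of_mem_Icc {a c σ : ℝ} (e : ℝ) (ha : 0 < a) (hσ : σ ∈ Icc a c) :
    σ ^ e ≤ a ^ e + c ^ e := by
  rcases le_or_gt 0 e with he | he
  · have := rpow_le_rpow (ha.le.trans hσ.1) hσ.2 he
    have := rpow_nonneg ha.le e
    linarith
  · have := rpow_le_rpow_of_nonpos ha hσ.1 he.le
    have := rpow_nonneg (ha.le.trans (hσ.1.trans hσ.2)) e
    linarith

section NormedSpace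

variable {E : Type*} [SeminormedAddCommGroup E]

lemma abs_sq_norm_sub_sq_norm_le (x y : E) :
    |‖x‖ ^ 2 - ‖y‖ ^ 2| ≤ (‖x‖ + ‖y‖) * ‖x - y‖ := by
  rw [sq_sub_sq, abs_mul, abs_of_nonneg (by positivity)]
  exact mul_le_mul_of_nonneg_left (abs_norm_sub_norm_le x y) (by positivity)

lemma norm_sub_le_mul_of_le_norm_sub {u v x y : E} {S r : ℝ} (hr : 0 < r)
    (hu : ‖u‖ ≤ S) (hv : ‖v‖ ≤ S) (hxy : r ≤ ‖x - y‖) :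
    ‖u - v‖ ≤ 2 * S / r * ‖x - y‖ := by
  have hS : 0 ≤ S := (norm_nonneg u).trans hu
  calc ‖u - v‖ ≤ 2 * S := by linarith [norm_sub_le u v]
    _ = 2 * S / r * r := by field_simp
    _ ≤ 2 * S / r * ‖x - y‖ := by gcongr

variable [NormedSpace ℝ E]

lemma norm_smul_sub_smul_le (s t : ℝ) (x y : E) :
    ‖s • x - t • y‖ ≤ |s| * ‖x - y‖ + |s - t| * ‖y‖ := by
  calc ‖s • x - t • y‖ = ‖s • (x - y) + (s - t) • y‖ := by congr 1; module
    _ ≤ ‖s • (x - y)‖ + ‖(s - t) • y‖ := norm_add_le _ _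
    _ = |s| * ‖x - y‖ + |s - t| * ‖y‖ := by rw [norm_smul, norm_smul, norm_eq_abs, norm_eq_abs]

lemma norm_smul_sub_smul_le_of_lipschitz {f : ℝ → ℝ} {a c H L M ε : ℝ}
    (hH : ∀ σ ∈ Icc a c, |f σ| ≤ H)
    (hL : ∀ σ ∈ Icc a c, ∀ τ ∈ Icc a c, |f σ - f τ| ≤ L * |σ - τ|) (hL0 : 0 ≤ L)
    {x y : E} (hx : ‖x‖ ≤ M) (hy : ‖y‖ ≤ M)
    (hσx : ε ^ 2 + ‖x‖ ^ 2 ∈ Icc a c) (hσy : ε ^ 2 + ‖y‖ ^ 2 ∈ Icc a c) :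
    ‖f (ε ^ 2 + ‖x‖ ^ 2) • x - f (ε ^ 2 + ‖y‖ ^ 2) • y‖ ≤
      (H + 2 * M ^ 2 * L) * ‖x - y‖ := by
  have hM : 0 ≤ M := (norm_nonneg x).trans hx
  have hdiff : |f (ε ^ 2 + ‖x‖ ^ 2) - f (ε ^ 2 + ‖y‖ ^ 2)| ≤ L * (2 * M * ‖x - y‖) :=
    calc _ ≤ L * |‖x‖ ^ 2 - ‖y‖ ^ 2| := by simpa using hL _ hσx _ hσy
      _ ≤ L * ((‖x‖ + ‖y‖) * ‖x - y‖) := by gcongr; exact abs_sq_norm_sub_sq_norm_le x y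
      _ ≤ L * (2 * M * ‖x - y‖) := by gcongr; linarith
  calc _ ≤ |f (ε ^ 2 + ‖x‖ ^ 2)| * ‖x - y‖ + |f (ε ^ 2 + ‖x‖ ^ 2) - f (ε ^ 2 + ‖y‖ ^ 2)| * ‖y‖ :=
        norm_smul_sub_smul_le _ _ x y
    _ ≤ H * ‖x - y‖ + L * (2 * M * ‖x - y‖) * M := by
        gcongr
        exact hH _ hσx
    _ = (H + 2 * M ^ 2 * L) * ‖x - y‖ := by ring

end NormedSpace

noncomputable def radialCoeff (b : ℝ) (g' : ℝ → ℝ) (σ : ℝ) : ℝ := b / √σ + g' σ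

section radialCoeff

variable {b Γ p : ℝ} {g' g'' : ℝ → ℝ}

lemma hasDerivAt_radialCoeff {σ : ℝ} (hg' : HasDerivAt g' (g'' σ) σ) (hσ : 0 < σ) :
    HasDerivAt (radialCoeff b g') (g'' σ - b / (2 * σ * √σ)) σ := by
  have hs : √σ ≠ 0 := (sqrt_pos.mpr hσ).ne'
  have h := ((hasDerivAt_const σ b).div (hasDerivAt_sqrt hσ.ne') hs).add hg'
  rw [sq_sqrt hσ.le] at h
  refine h.congr_deriv ?_
  field_simp
  ring

lemma norm_radialCoeff_smul_le {E : Type*} [SeminormedAddCommGroup E] [NormedSpace ℝ E]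
    (hb : 0 ≤ b) (hΓ : 0 ≤ Γ) (hp : 1 ≤ p)
    (hG1 : ∀ σ : ℝ, 0 < σ → |g' σ| ≤ Γ * σ ^ (p / 2 - 1))
    {σ c : ℝ} {ξ : E} (hσ : 0 < σ) (hξσ : ‖ξ‖ ^ 2 ≤ σ) (hσc : σ ≤ c) :
    ‖radialCoeff b g' σ • ξ‖ ≤ b + Γ * c ^ ((p - 1) / 2) := by
  have hs : 0 < √σ := sqrt_pos.mpr hσ
  have hξ : ‖ξ‖ ≤ √σ := le_sqrt_of_sq_le hξσ
  have hpow : σ ^ (p / 2 - 1) * √σ = σ ^ ((p - 1) / 2) := by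
    rw [sqrt_eq_rpow, ← rpow_add hσ]; ring_nf
  rw [norm_smul, norm_eq_abs, radialCoeff]
  calc |b / √σ + g' σ| * ‖ξ‖ ≤ (b / √σ + Γ * σ ^ (p / 2 - 1)) * √σ := by
        gcongr
        calc |b / √σ + g' σ| ≤ |b / √σ| + |g' σ| := abs_add_le _ _
          _ ≤ b / √σ + Γ * σ ^ (p / 2 - 1) := by
            rw [abs_of_nonneg (by positivity)]; linarith [hG1 σ hσ]
    _ = b + Γ * σ ^ ((p - 1) / 2) := by rw [add_mul, mul_assoc, hpow]; field_simp
    _ ≤ b + Γ * c ^ ((p - 1) / 2) := by gcongr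

variable {r c : ℝ}

lemma abs_radialCoeff_le (hb : 0 ≤ b) (hΓ : 0 ≤ Γ)
    (hG1 : ∀ σ : ℝ, 0 < σ → |g' σ| ≤ Γ * σ ^ (p / 2 - 1))
    (hr : 0 < r) {σ : ℝ} (hσ : σ ∈ Icc (r ^ 2) c) :
    |radialCoeff b g' σ| ≤ b / r + Γ * ((r ^ 2) ^ (p / 2 - 1) + c ^ (p / 2 - 1)) := by
  have hσ0 : 0 < σ := lt_of_lt_of_le (by positivity) hσ.1
  have hrσ : r ≤ √σ := le_sqrt_of_sq_le hσ.1
  have hrpow := rpow_le_rpow_add_rpow_of_mem_Icc (p / 2 - 1) (by positivity) hσ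
  calc |b / √σ + g' σ| ≤ |b / √σ| + |g' σ| := abs_add_le _ _
    _ ≤ b / r + Γ * ((r ^ 2) ^ (p / 2 - 1) + c ^ (p / 2 - 1)) := by
      rw [abs_of_nonneg (by positivity)]
      gcongr
      exact (hG1 σ hσ0).trans (by gcongr)

lemma abs_radialCoeff_sub_le (hb : 0 ≤ b) (hΓ : 0 ≤ Γ)
    (hg' : ∀ σ : ℝ, 0 < σ → HasDerivAt g' (g'' σ) σ)
    (hG2 : ∀ σ : ℝ, 0 < σ → |g'' σ| ≤ Γ * σ ^ (p / 2 - 2))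
    (hr : 0 < r) {σ τ : ℝ} (hσ : σ ∈ Icc (r ^ 2) c) (hτ : τ ∈ Icc (r ^ 2) c) :
    |radialCoeff b g' σ - radialCoeff b g' τ| ≤
      (b / (2 * r ^ 3) + Γ * ((r ^ 2) ^ (p / 2 - 2) + c ^ (p / 2 - 2))) * |σ - τ| := by
  have hderiv_le : ∀ s ∈ Icc (r ^ 2) c,
      ‖g'' s - b / (2 * s * √s)‖ ≤
        b / (2 * r ^ 3) + Γ * ((r ^ 2) ^ (p / 2 - 2) + c ^ (p / 2 - 2)) := by
    intro s hs
    have hs0 : 0 < s := lt_of_lt_of_le (by positivity) hs.1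
    have hrs : r ≤ √s := le_sqrt_of_sq_le hs.1
    have hr3 : 2 * r ^ 3 ≤ 2 * s * √s :=
      calc 2 * r ^ 3 = 2 * r ^ 2 * r := by ring
        _ ≤ 2 * s * √s := by gcongr; exact hs.1
    have hrpow := rpow_le_rpow_add_rpow_of_mem_Icc (p / 2 - 2) (by positivity) hs
    calc ‖g'' s - b / (2 * s * √s)‖ ≤ |g'' s| + |b / (2 * s * √s)| := by
          rw [norm_eq_abs]; exact abs_sub _ _
      _ ≤ Γ * ((r ^ 2) ^ (p / 2 - 2) + c ^ (p / 2 - 2)) + b / (2 * r ^ 3) := by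
          rw [abs_of_nonneg (a := b / (2 * s * √s)) (by positivity)]
          gcongr
          exact (hG2 s hs0).trans (by gcongr)
      _ = _ := add_comm _ _
  have hderiv : ∀ s ∈ Icc (r ^ 2) c,
      HasDerivWithinAt (radialCoeff b g') (g'' s - b / (2 * s * √s)) (Icc (r ^ 2) c) s :=
    fun s hs ↦
      have hs0 : 0 < s := lt_of_lt_of_le (by positivity) hs.1
      (hasDerivAt_radialCoeff (hg' s hs0) hs0).hasDerivWithinAt
  simpa only [norm_eq_abs] using
    Convex.norm_image_sub_le_of_norm_hasDerivWithin_le hderiv hderiv_le (convex_Icc _ _) hτ hσ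

end radialCoeff

lemma sq_add_sq_mem_Icc {ε r t M : ℝ} (hε : 0 ≤ ε) (hεr : ε ≤ r) (hrt : r ≤ t) (htM : t ≤ M) :
    ε ^ 2 + t ^ 2 ∈ Icc (r ^ 2) (r ^ 2 + M ^ 2) := by
  constructor <;> nlinarith

theorem stmt_3_general (k : ℕ) (p b γ Γ δ M : ℝ)
    (hp : 1 < p) (hb : 0 < b) (hγ : 0 < γ) (hγΓ : γ ≤ Γ)
    (hδ0 : 0 < δ) :
    ∃ C₂ : ℝ, 0 < C₂ ∧
      ∀ g g' g'' : ℝ → ℝ,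
        (∀ σ : ℝ, 0 < σ → HasDerivAt g (g' σ) σ) →
        (∀ σ : ℝ, 0 < σ → HasDerivAt g' (g'' σ) σ) →
        ContinuousOn g'' (Set.Ioi 0) →
        (∀ σ : ℝ, 0 < σ → |g' σ| ≤ Γ * σ ^ (p / 2 - 1)) →
        (∀ σ : ℝ, 0 < σ → |g'' σ| ≤ Γ * σ ^ (p / 2 - 2)) →
        (∀ σ : ℝ, 0 ≤ σ → ∀ τ : ℝ, 0 < τ → τ < 1 →
          γ * (σ + τ) ^ (p / 2 - 1) ≤ g' (σ + τ) + 2 * σ * min (g'' (σ + τ)) 0) →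
        ∀ ε : ℝ, 0 < ε → ε < δ / 4 →
          ∀ ξ₀ ξ₁ : EuclideanSpace ℝ (Fin k),
            δ ≤ ‖ξ₀‖ → ‖ξ₀‖ ≤ M → ‖ξ₁‖ ≤ M →
            ‖((b / Real.sqrt (ε ^ 2 + ‖ξ₁‖ ^ 2)) • ξ₁ + g' (ε ^ 2 + ‖ξ₁‖ ^ 2) • ξ₁)
                - ((b / Real.sqrt (ε ^ 2 + ‖ξ₀‖ ^ 2)) • ξ₀ + g' (ε ^ 2 + ‖ξ₀‖ ^ 2) • ξ₀)‖
              ≤ C₂ * ‖ξ₁ - ξ₀‖ := by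
  have hΓ : 0 < Γ := hγ.trans_le hγΓ
  set r := δ / 2 with hr_def
  set c := r ^ 2 + M ^ 2
  set S := b + Γ * c ^ ((p - 1) / 2)
  set H := b / r + Γ * ((r ^ 2) ^ (p / 2 - 1) + c ^ (p / 2 - 1))
  set L := b / (2 * r ^ 3) + Γ * ((r ^ 2) ^ (p / 2 - 2) + c ^ (p / 2 - 2))
  refine ⟨2 * S / r + (H + 2 * M ^ 2 * L), by positivity, ?_⟩
  intro g g' g'' _ hg' _ hG1 hG2 _ ε hε0 hε ξ₀ ξ₁ hξ₀ hξ₀M hξ₁M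
  simp only [← add_smul]
  change ‖radialCoeff b g' _ • ξ₁ - radialCoeff b g' _ • ξ₀‖ ≤ _
  have hr : 0 < r := by positivity
  have hεr : ε ≤ r := by linarith [hr_def]
  rcases le_or_gt r ‖ξ₁ - ξ₀‖ with hfar | hnear
  · have hA : ∀ ξ : EuclideanSpace ℝ (Fin k), ‖ξ‖ ≤ M →
        ‖radialCoeff b g' (ε ^ 2 + ‖ξ‖ ^ 2) • ξ‖ ≤ S :=
      fun ξ hξ ↦ norm_radialCoeff_smul_le hb.le hΓ.le hp.le hG1 (by positivity) (by nlinarith)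
        (by nlinarith [norm_nonneg ξ])
    have := norm_sub_le_mul_of_le_norm_sub hr (hA ξ₁ hξ₁M) (hA ξ₀ hξ₀M) hfar
    nlinarith [norm_nonneg (ξ₁ - ξ₀), show 0 ≤ H + 2 * M ^ 2 * L by positivity]
  · have hξ₁ : r ≤ ‖ξ₁‖ := by linarith [norm_sub_norm_le ξ₀ ξ₁, norm_sub_rev ξ₀ ξ₁, hr_def]
    have := norm_smul_sub_smul_le_of_lipschitz (fun σ hσ ↦ abs_radialCoeff_le hb.le hΓ.le hG1 hr hσ)
      (fun σ hσ τ hτ ↦ abs_radialCoeff_sub_le hb.le hΓ.le hg' hG2 hr hσ hτ) (by positivity)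
      hξ₁M hξ₀M (sq_add_sq_mem_Icc hε0.le hεr hξ₁ hξ₁M)
      (sq_add_sq_mem_Icc hε0.le hεr (by linarith [hr_def]) hξ₀M)
    nlinarith [norm_nonneg (ξ₁ - ξ₀), show 0 ≤ 2 * S / r by positivity]

/-- Growth estimate: there exists `C₂ > 0`, depending only on `b, p, γ, Γ, δ, M`,
such that for every `g` satisfying (G1)–(G3), every `0 < ε < δ/4`, and all `ξ₀, ξ₁`
with `δ ≤ |ξ₀| ≤ M`, `|ξ₁| ≤ M`, one has `|A_ε(ξ₁) − A_ε(ξ₀)| ≤ C₂ |ξ₁ − ξ₀|`,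
where `A_ε(ξ) = b ξ/√(ε²+|ξ|²) + g'(ε²+|ξ|²) ξ`. -/
theorem stmt_3 (k : ℕ) (hk : 1 ≤ k) (p b γ Γ δ M : ℝ)
    (hp : 1 < p) (hb : 0 < b) (hγ : 0 < γ) (hγΓ : γ ≤ Γ)
    (hδ0 : 0 < δ) (hδ1 : δ < 1) (hM : δ < M) :
    ∃ C₂ : ℝ, 0 < C₂ ∧
      ∀ g g' g'' : ℝ → ℝ,
        (∀ σ : ℝ, 0 < σ → HasDerivAt g (g' σ) σ) →
        (∀ σ : ℝ, 0 < σ → HasDerivAt g' (g'' σ) σ) →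
        ContinuousOn g'' (Set.Ioi 0) →
        (∀ σ : ℝ, 0 < σ → |g' σ| ≤ Γ * σ ^ (p / 2 - 1)) →
        (∀ σ : ℝ, 0 < σ → |g'' σ| ≤ Γ * σ ^ (p / 2 - 2)) →
        (∀ σ : ℝ, 0 ≤ σ → ∀ τ : ℝ, 0 < τ → τ < 1 →
          γ * (σ + τ) ^ (p / 2 - 1) ≤ g' (σ + τ) + 2 * σ * min (g'' (σ + τ)) 0) →
        ∀ ε : ℝ, 0 < ε → ε < δ / 4 →
          ∀ ξ₀ ξ₁ : EuclideanSpace ℝ (Fin k),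
            δ ≤ ‖ξ₀‖ → ‖ξ₀‖ ≤ M → ‖ξ₁‖ ≤ M →
            ‖((b / Real.sqrt (ε ^ 2 + ‖ξ₁‖ ^ 2)) • ξ₁ + g' (ε ^ 2 + ‖ξ₁‖ ^ 2) • ξ₁)
                - ((b / Real.sqrt (ε ^ 2 + ‖ξ₀‖ ^ 2)) • ξ₀ + g' (ε ^ 2 + ‖ξ₀‖ ^ 2) • ξ₀)‖
              ≤ C₂ * ‖ξ₁ - ξ₀‖ :=
  stmt_3_general k p b γ Γ δ M hp hb hγ hγΓ hδ0
end

section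
/- Let 0 < δ < 1 and β₀ ∈ (0,1]. There exists a constant C > 0, depending only on p and β₀, such that for every g satisfying (G1)–(G4), every ε with 0 < ε < δ/4, every μ with δ < μ < ∞, and all ξ₀, ξ₁ ∈ ℝ^k with δ + μ/4 ≤ |ξ₀| ≤ δ + μ and |ξ₁| ≤ δ + μ, one has |ℬ_{p,ε}(ξ₀)(ξ₁ − ξ₀) − (A_{p,ε}(ξ₁) − A_{p,ε}(ξ₀))| ≤ C·Γ·μ^{p−2−β₀}·|ξ₁ − ξ₀|^{1+β₀}. -/
/-!
Everything is measured at the scale `ρ = ‖ξ₀‖`, which is comparable to `μ`. If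
`‖ξ₁ - ξ₀‖ ≤ ρ / 4`, the segment from `ξ₀` to `ξ₁` stays where `ε² + ‖ξ‖² ≈ ρ²`, so the mean
value theorem bounds the linearisation error of `A` by the oscillation of `ℬ` along the segment,
and (G2) together with the Hölder bound (G4) make `ℬ` `β₀`-Hölder there with constant
`Γ ρ^(p-2-β₀)`. Otherwise `ρ ≤ 4 ‖ξ₁ - ξ₀‖`, and the three terms are bounded separately through
(G1) and (G2).
-/

open Real RealInnerProductSpace

open Set

lemma rpow_le_of_le_mul {c x σ a b : ℝ} (hc : 1 ≤ c) (hx : 0 ≤ x) (hσ : 0 ≤ σ)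
    (ha : 0 ≤ a) (hab : a ≤ b) (h : σ ≤ c * x) : σ ^ a ≤ c ^ b * x ^ a :=
  calc σ ^ a ≤ (c * x) ^ a := rpow_le_rpow hσ h ha
    _ = c ^ a * x ^ a := mul_rpow (by linarith) hx
    _ ≤ c ^ b * x ^ a := by gcongr

lemma rpow_le_of_div_le_of_le_mul {c x σ a b : ℝ} (hc : 1 ≤ c) (hx : 0 < x) (hab : |a| ≤ b)
    (h₁ : x / c ≤ σ) (h₂ : σ ≤ c * x) : σ ^ a ≤ c ^ b * x ^ a := by
  have hc₀ : 0 < c := by linarith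
  have hσ : 0 < σ := (div_pos hx hc₀).trans_le h₁
  rcases le_total 0 a with ha | ha
  · exact rpow_le_of_le_mul hc hx.le hσ.le ha ((le_abs_self a).trans hab) h₂
  · calc σ ^ a ≤ (x / c) ^ a := rpow_le_rpow_of_nonpos (by positivity) h₁ ha
      _ = c ^ (-a) * x ^ a := by rw [div_rpow hx.le hc₀.le, rpow_neg hc₀.le]; ring
      _ ≤ c ^ b * x ^ a := by
        gcongr
        exact (neg_le_abs a).trans hab

lemma sq_rpow {x : ℝ} (hx : 0 ≤ x) (a : ℝ) : (x ^ 2) ^ a = x ^ (2 * a) := by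
  rw [← rpow_natCast_mul hx]; norm_num

lemma rpow_sub_one_mul_le {ρ d a β : ℝ} (hρ : 0 < ρ) (hd : 0 ≤ d) (hdρ : d ≤ ρ) (hβ : β ≤ 1) :
    ρ ^ (a - 1) * d ≤ ρ ^ (a - β) * d ^ β := by
  have hsplit : d = d ^ (1 - β) * d ^ β := by
    rw [← rpow_add' hd (by norm_num), sub_add_cancel, rpow_one]
  calc ρ ^ (a - 1) * d = ρ ^ (a - 1) * d ^ (1 - β) * d ^ β := by rw [mul_assoc, ← hsplit]
    _ ≤ ρ ^ (a - 1) * ρ ^ (1 - β) * d ^ β := by gcongr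
    _ = ρ ^ (a - β) * d ^ β := by rw [← rpow_add hρ]; ring_nf

lemma rpow_le_rpow_sub_mul_rpow {ρ c d a β : ℝ} (hρ : 0 < ρ) (hc : 0 ≤ c) (hd : 0 ≤ d)
    (hβ : 0 ≤ β) (hρd : ρ ≤ c * d) : ρ ^ a ≤ c ^ β * (ρ ^ (a - β) * d ^ β) :=
  calc ρ ^ a = ρ ^ (a - β) * ρ ^ β := by rw [← rpow_add hρ, sub_add_cancel]
    _ ≤ ρ ^ (a - β) * (c * d) ^ β := by gcongr
    _ = c ^ β * (ρ ^ (a - β) * d ^ β) := by rw [mul_rpow hc hd]; ring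

lemma sq_add_sq_norm_mem_Icc {E : Type*} [NormedAddCommGroup E] {ε : ℝ} {ξ₀ ξ : E}
    (hε : |ε| ≤ ‖ξ₀‖ / 4) (hξ : ‖ξ - ξ₀‖ ≤ ‖ξ₀‖ / 4) :
    ε ^ 2 + ‖ξ‖ ^ 2 ∈ Icc (‖ξ₀‖ ^ 2 / 4) (2 * ‖ξ₀‖ ^ 2) := by
  have h₁ := norm_sub_norm_le ξ₀ ξ
  have h₂ := norm_sub_norm_le ξ ξ₀
  rw [norm_sub_rev] at h₁
  have hε2 : ε ^ 2 ≤ (‖ξ₀‖ / 4) ^ 2 := sq_le_sq' (abs_le.mp hε).1 (abs_le.mp hε).2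
  constructor <;> nlinarith [norm_nonneg ξ₀, norm_nonneg ξ, sq_nonneg ε]

section RadialField

variable {E : Type*} [NormedAddCommGroup E] [InnerProductSpace ℝ E] {g' g'' : ℝ → ℝ}
  {ε p β Γ : ℝ} {ξ₀ ξ₁ : E}

/-- The paper's `A_{p,ε}`, with `g'` in place of the derivative of `g`. -/
def radialField (g' : ℝ → ℝ) (ε : ℝ) (ξ : E) : E := g' (ε ^ 2 + ‖ξ‖ ^ 2) • ξ

/-- The paper's `ℬ_{p,ε}(ξ) η`, with `g''` in place of the second derivative of `g`. -/
def radialFieldDeriv (g' g'' : ℝ → ℝ) (ε : ℝ) (ξ η : E) : E :=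
  g' (ε ^ 2 + ‖ξ‖ ^ 2) • η + (2 * g'' (ε ^ 2 + ‖ξ‖ ^ 2) * ⟪ξ, η⟫) • ξ

lemma hasDerivAt_radialField_add_smul (hg' : ∀ σ, 0 < σ → HasDerivAt g' (g'' σ) σ)
    (hε : ε ≠ 0) (ξ η : E) (t : ℝ) :
    HasDerivAt (fun s : ℝ => radialField g' ε (ξ + s • η))
      (radialFieldDeriv g' g'' ε (ξ + t • η) η) t := by
  have hline : HasDerivAt (fun s : ℝ => ξ + s • η) η t := by
    simpa using ((hasDerivAt_id t).smul_const η).const_add ξ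
  have hσ : HasDerivAt (fun s : ℝ => ε ^ 2 + ‖ξ + s • η‖ ^ 2) (2 * ⟪ξ + t • η, η⟫) t :=
    hline.norm_sq.const_add _
  convert ((hg' _ (by positivity)).comp t hσ).smul hline using 1
  · rfl
  · simp only [radialFieldDeriv, Function.comp_apply]
    congr 2
    ring

lemma norm_radialFieldDeriv_sub_radialField_add_sub_le
    (hg' : ∀ σ, 0 < σ → HasDerivAt g' (g'' σ) σ) (hε : ε ≠ 0) {ξ η : E} {M : ℝ}
    (hM : ∀ t ∈ Ico (0 : ℝ) 1,
      ‖radialFieldDeriv g' g'' ε (ξ + t • η) η - radialFieldDeriv g' g'' ε ξ η‖ ≤ M) :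
    ‖radialFieldDeriv g' g'' ε ξ η - (radialField g' ε (ξ + η) - radialField g' ε ξ)‖ ≤ M := by
  have hderiv : ∀ t ∈ Icc (0 : ℝ) 1, HasDerivWithinAt
      (fun s : ℝ => radialField g' ε (ξ + s • η) - s • radialFieldDeriv g' g'' ε ξ η)
      (radialFieldDeriv g' g'' ε (ξ + t • η) η - radialFieldDeriv g' g'' ε ξ η) (Icc 0 1) t :=
    fun t _ => ((hasDerivAt_radialField_add_smul hg' hε ξ η t).sub (by
      simpa using (hasDerivAt_id t).smul_const (radialFieldDeriv g' g'' ε ξ η))).hasDerivWithinAt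
  have := norm_image_sub_le_of_norm_deriv_le_segment_01' hderiv hM
  rw [← norm_neg]
  simpa [sub_eq_add_neg, add_comm, add_left_comm, add_assoc] using this

lemma radialFieldDeriv_sub_radialFieldDeriv (ξ ξ₀ η : E) :
    radialFieldDeriv g' g'' ε ξ η - radialFieldDeriv g' g'' ε ξ₀ η
      = (g' (ε ^ 2 + ‖ξ‖ ^ 2) - g' (ε ^ 2 + ‖ξ₀‖ ^ 2)) • η
        + (2 * (g'' (ε ^ 2 + ‖ξ‖ ^ 2) - g'' (ε ^ 2 + ‖ξ₀‖ ^ 2)) * ⟪ξ, η⟫) • ξ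
        + (2 * g'' (ε ^ 2 + ‖ξ₀‖ ^ 2)) • (⟪ξ - ξ₀, η⟫ • ξ + ⟪ξ₀, η⟫ • (ξ - ξ₀)) := by
  rw [inner_sub_left]
  simp only [radialFieldDeriv]
  module

lemma norm_radialFieldDeriv_sub_radialFieldDeriv_le (ξ ξ₀ η : E) :
    ‖radialFieldDeriv g' g'' ε ξ η - radialFieldDeriv g' g'' ε ξ₀ η‖
      ≤ |g' (ε ^ 2 + ‖ξ‖ ^ 2) - g' (ε ^ 2 + ‖ξ₀‖ ^ 2)| * ‖η‖
        + 2 * |g'' (ε ^ 2 + ‖ξ‖ ^ 2) - g'' (ε ^ 2 + ‖ξ₀‖ ^ 2)| * ‖ξ‖ ^ 2 * ‖η‖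
        + 2 * |g'' (ε ^ 2 + ‖ξ₀‖ ^ 2)| * (‖ξ‖ + ‖ξ₀‖) * ‖ξ - ξ₀‖ * ‖η‖ := by
  rw [radialFieldDeriv_sub_radialFieldDeriv]
  refine norm_add₃_le.trans (add_le_add_three ?_ ?_ ?_)
  · rw [norm_smul, norm_eq_abs]
  · rw [norm_smul, norm_eq_abs, abs_mul, abs_mul, abs_two]
    have := abs_real_inner_le_norm ξ η
    calc 2 * |g'' (ε ^ 2 + ‖ξ‖ ^ 2) - g'' (ε ^ 2 + ‖ξ₀‖ ^ 2)| * |⟪ξ, η⟫| * ‖ξ‖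
        ≤ 2 * |g'' (ε ^ 2 + ‖ξ‖ ^ 2) - g'' (ε ^ 2 + ‖ξ₀‖ ^ 2)| * (‖ξ‖ * ‖η‖) * ‖ξ‖ := by gcongr
      _ = _ := by ring
  · rw [norm_smul, norm_eq_abs, abs_mul, abs_two]
    have h₁ : ‖⟪ξ - ξ₀, η⟫ • ξ‖ ≤ ‖ξ - ξ₀‖ * ‖η‖ * ‖ξ‖ := by
      rw [norm_smul, norm_eq_abs]; gcongr; exact abs_real_inner_le_norm _ _
    have h₂ : ‖⟪ξ₀, η⟫ • (ξ - ξ₀)‖ ≤ ‖ξ₀‖ * ‖η‖ * ‖ξ - ξ₀‖ := by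
      rw [norm_smul, norm_eq_abs]; gcongr; exact abs_real_inner_le_norm _ _
    calc 2 * |g'' (ε ^ 2 + ‖ξ₀‖ ^ 2)| * ‖⟪ξ - ξ₀, η⟫ • ξ + ⟪ξ₀, η⟫ • (ξ - ξ₀)‖
        ≤ 2 * |g'' (ε ^ 2 + ‖ξ₀‖ ^ 2)|
            * (‖ξ - ξ₀‖ * ‖η‖ * ‖ξ‖ + ‖ξ₀‖ * ‖η‖ * ‖ξ - ξ₀‖) := by
          gcongr; exact (norm_add_le _ _).trans (add_le_add h₁ h₂)
      _ = _ := by ring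

lemma norm_radialFieldDeriv_sub_le (hg' : ∀ σ, 0 < σ → HasDerivAt g' (g'' σ) σ)
    {M : ℝ} {ξ : E} (hξ₀ : ξ₀ ≠ 0) (hε : |ε| ≤ ‖ξ₀‖ / 4)
    (hξ : ‖ξ - ξ₀‖ ≤ ‖ξ₀‖ / 4) (hβ : 0 ≤ β) (hβ1 : β ≤ 1)
    (hbound : ∀ σ ∈ Icc (‖ξ₀‖ ^ 2 / 4) (2 * ‖ξ₀‖ ^ 2), |g'' σ| ≤ M * ‖ξ₀‖ ^ (p - 4))
    (hholder : ∀ σ₁ ∈ Icc (‖ξ₀‖ ^ 2 / 4) (2 * ‖ξ₀‖ ^ 2), ∀ σ₂ ∈ Icc (‖ξ₀‖ ^ 2 / 4) (2 * ‖ξ₀‖ ^ 2),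
      |g'' σ₁ - g'' σ₂| ≤ M * ‖ξ₀‖ ^ (p - 4 - 2 * β) * |σ₁ - σ₂| ^ β) (η : E) :
    ‖radialFieldDeriv g' g'' ε ξ η - radialFieldDeriv g' g'' ε ξ₀ η‖
      ≤ 20 * M * ‖ξ₀‖ ^ (p - 2 - β) * ‖ξ - ξ₀‖ ^ β * ‖η‖ := by
  set ρ := ‖ξ₀‖
  set d := ‖ξ - ξ₀‖
  set σ := ε ^ 2 + ‖ξ‖ ^ 2
  set σ₀ := ε ^ 2 + ρ ^ 2
  have hρ : 0 < ρ := norm_pos_iff.mpr hξ₀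
  have hd : 0 ≤ d := norm_nonneg _
  have hσ : σ ∈ Icc (ρ ^ 2 / 4) (2 * ρ ^ 2) := sq_add_sq_norm_mem_Icc hε hξ
  have hσ₀ : σ₀ ∈ Icc (ρ ^ 2 / 4) (2 * ρ ^ 2) :=
    sq_add_sq_norm_mem_Icc hε (by rw [sub_self, norm_zero]; positivity)
  have hM : 0 ≤ M := nonneg_of_mul_nonneg_left ((abs_nonneg _).trans (hbound σ₀ hσ₀))
    (rpow_pos_of_pos hρ _)
  have hξρ : ‖ξ‖ ≤ 5 / 4 * ρ := by linarith [norm_sub_norm_le ξ ξ₀]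
  have hΔσ : |σ - σ₀| ≤ 3 * ρ * d := by
    have : |‖ξ‖ - ρ| ≤ d := abs_norm_sub_norm_le ξ ξ₀
    calc |σ - σ₀| = |‖ξ‖ - ρ| * (‖ξ‖ + ρ) := by
          rw [show σ - σ₀ = (‖ξ‖ - ρ) * (‖ξ‖ + ρ) by ring, abs_mul,
            abs_of_nonneg (show 0 ≤ ‖ξ‖ + ρ by positivity)]
      _ ≤ d * (3 * ρ) := by gcongr; linarith
      _ = 3 * ρ * d := by ring
  have hΔg' : |g' σ - g' σ₀| ≤ M * ρ ^ (p - 4) * (3 * ρ * d) := by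
    have := (convex_Icc (ρ ^ 2 / 4) (2 * ρ ^ 2)).norm_image_sub_le_of_norm_hasDerivWithin_le
      (fun τ hτ => (hg' τ (lt_of_lt_of_le (by positivity) hτ.1)).hasDerivWithinAt)
      (fun τ hτ => hbound τ hτ) hσ₀ hσ
    rw [norm_eq_abs, norm_eq_abs] at this
    exact this.trans (by gcongr)
  have hΔg'' : |g'' σ - g'' σ₀| ≤ 3 * M * ρ ^ (p - 4 - β) * d ^ β :=
    calc |g'' σ - g'' σ₀| ≤ M * ρ ^ (p - 4 - 2 * β) * (3 * ρ * d) ^ β :=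
          (hholder σ hσ σ₀ hσ₀).trans (by gcongr)
      _ = 3 ^ β * M * (ρ ^ (p - 4 - 2 * β) * ρ ^ β) * d ^ β := by
          rw [mul_rpow (by positivity) hd, mul_rpow (by norm_num) hρ.le]; ring
      _ ≤ 3 * M * ρ ^ (p - 4 - β) * d ^ β := by
          rw [← rpow_add hρ, show p - 4 - 2 * β + β = p - 4 - β by ring]
          gcongr
          exact rpow_le_self_of_one_le (by norm_num) hβ1
  have hinterp : ρ ^ (p - 3) * d ≤ ρ ^ (p - 2 - β) * d ^ β := by
    have := rpow_sub_one_mul_le (a := p - 2) hρ hd (by linarith) hβ1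
    rwa [show p - 2 - 1 = p - 3 by ring] at this
  have hρ3 : ρ ^ (p - 4) * ρ = ρ ^ (p - 3) := by
    rw [← rpow_add_one hρ.ne']; ring_nf
  have hρ2 : ρ ^ (p - 4 - β) * ρ ^ 2 = ρ ^ (p - 2 - β) := by
    rw [← rpow_natCast, ← rpow_add hρ]; ring_nf
  have hg''σ₀ := hbound σ₀ hσ₀
  calc ‖radialFieldDeriv g' g'' ε ξ η - radialFieldDeriv g' g'' ε ξ₀ η‖
      ≤ |g' σ - g' σ₀| * ‖η‖ + 2 * |g'' σ - g'' σ₀| * ‖ξ‖ ^ 2 * ‖η‖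
        + 2 * |g'' σ₀| * (‖ξ‖ + ρ) * d * ‖η‖ :=
        norm_radialFieldDeriv_sub_radialFieldDeriv_le ξ ξ₀ η
    _ ≤ M * ρ ^ (p - 4) * (3 * ρ * d) * ‖η‖
        + 2 * (3 * M * ρ ^ (p - 4 - β) * d ^ β) * (5 / 4 * ρ) ^ 2 * ‖η‖
        + 2 * (M * ρ ^ (p - 4)) * (5 / 4 * ρ + ρ) * d * ‖η‖ := by gcongr
    _ = 15 / 2 * (M * (ρ ^ (p - 3) * d) * ‖η‖)
        + 75 / 8 * (M * ρ ^ (p - 2 - β) * d ^ β * ‖η‖) := by rw [← hρ3, ← hρ2]; ring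
    _ ≤ 15 / 2 * (M * (ρ ^ (p - 2 - β) * d ^ β) * ‖η‖)
        + 75 / 8 * (M * ρ ^ (p - 2 - β) * d ^ β * ‖η‖) := by
        gcongr 15 / 2 * (M * ?_ * ‖η‖) + _
    _ ≤ 20 * M * ρ ^ (p - 2 - β) * d ^ β * ‖η‖ := by
        have : 0 ≤ M * ρ ^ (p - 2 - β) * d ^ β * ‖η‖ := by positivity
        linarith

lemma norm_radialField_le (hG1 : ∀ σ, 0 < σ → |g' σ| ≤ Γ * σ ^ (p / 2 - 1)) (hε : ε ≠ 0)
    (ξ : E) : ‖radialField g' ε ξ‖ ≤ Γ * (ε ^ 2 + ‖ξ‖ ^ 2) ^ ((p - 1) / 2) := by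
  set σ := ε ^ 2 + ‖ξ‖ ^ 2
  have hσ : 0 < σ := by positivity
  have hξ : ‖ξ‖ ≤ σ ^ (1 / 2 : ℝ) := by
    rw [← sqrt_eq_rpow]
    exact le_sqrt_of_sq_le (le_add_of_nonneg_left (sq_nonneg ε))
  have hΓ : 0 ≤ Γ * σ ^ (p / 2 - 1) := (abs_nonneg _).trans (hG1 σ hσ)
  calc ‖radialField g' ε ξ‖ = |g' σ| * ‖ξ‖ := by rw [radialField, norm_smul, norm_eq_abs]
    _ ≤ Γ * σ ^ (p / 2 - 1) * σ ^ (1 / 2 : ℝ) := by gcongr; exact hG1 σ hσ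
    _ = Γ * σ ^ ((p - 1) / 2) := by rw [mul_assoc, ← rpow_add hσ]; ring_nf

lemma norm_radialFieldDeriv_le (hG1 : ∀ σ, 0 < σ → |g' σ| ≤ Γ * σ ^ (p / 2 - 1))
    (hG2 : ∀ σ, 0 < σ → |g'' σ| ≤ Γ * σ ^ (p / 2 - 2)) (hε : ε ≠ 0) (ξ η : E) :
    ‖radialFieldDeriv g' g'' ε ξ η‖ ≤ 3 * Γ * (ε ^ 2 + ‖ξ‖ ^ 2) ^ (p / 2 - 1) * ‖η‖ := by
  set σ := ε ^ 2 + ‖ξ‖ ^ 2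
  have hσ : 0 < σ := by positivity
  have hξ : ‖ξ‖ ^ 2 ≤ σ := le_add_of_nonneg_left (sq_nonneg ε)
  have hσ₂ : σ ^ (p / 2 - 2) * σ = σ ^ (p / 2 - 1) := by
    rw [← rpow_add_one hσ.ne']; ring_nf
  have hΓ : 0 ≤ Γ * σ ^ (p / 2 - 2) := (abs_nonneg _).trans (hG2 σ hσ)
  calc ‖radialFieldDeriv g' g'' ε ξ η‖
      ≤ ‖g' σ • η‖ + ‖(2 * g'' σ * ⟪ξ, η⟫) • ξ‖ := norm_add_le _ _
    _ ≤ |g' σ| * ‖η‖ + 2 * |g'' σ| * (‖ξ‖ * ‖η‖) * ‖ξ‖ := by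
        rw [norm_smul, norm_smul, norm_eq_abs, norm_eq_abs, abs_mul, abs_mul, abs_two]
        gcongr
        exact abs_real_inner_le_norm _ _
    _ = |g' σ| * ‖η‖ + 2 * |g'' σ| * ‖ξ‖ ^ 2 * ‖η‖ := by ring
    _ ≤ Γ * σ ^ (p / 2 - 1) * ‖η‖ + 2 * (Γ * σ ^ (p / 2 - 2)) * σ * ‖η‖ := by
        gcongr
        exacts [hG1 σ hσ, hG2 σ hσ]
    _ = 3 * Γ * σ ^ (p / 2 - 1) * ‖η‖ := by rw [← hσ₂]; ring

lemma norm_radialFieldDeriv_sub_radialField_sub_le_of_norm_sub_le (hp : 0 ≤ p) (hβ : 0 ≤ β)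
    (hβ1 : β ≤ 1) (hg' : ∀ σ, 0 < σ → HasDerivAt g' (g'' σ) σ)
    (hG2 : ∀ σ, 0 < σ → |g'' σ| ≤ Γ * σ ^ (p / 2 - 2))
    (hG4 : ∀ σ₁ ∈ Icc (‖ξ₀‖ ^ 2 / 4) (2 * ‖ξ₀‖ ^ 2), ∀ σ₂ ∈ Icc (‖ξ₀‖ ^ 2 / 4) (2 * ‖ξ₀‖ ^ 2),
      |g'' σ₁ - g'' σ₂| ≤ Γ * ‖ξ₀‖ ^ (p - 4 - 2 * β) * |σ₁ - σ₂| ^ β)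
    (hε : 0 < ε) (hεξ₀ : ε ≤ ‖ξ₀‖ / 4) (hξ₁ : ‖ξ₁ - ξ₀‖ ≤ ‖ξ₀‖ / 4) :
    ‖radialFieldDeriv g' g'' ε ξ₀ (ξ₁ - ξ₀) - (radialField g' ε ξ₁ - radialField g' ε ξ₀)‖
      ≤ 20 * 17 ^ (p + 2) * Γ * ‖ξ₀‖ ^ (p - 2 - β) * ‖ξ₁ - ξ₀‖ ^ (1 + β) := by
  set ρ := ‖ξ₀‖
  set η := ξ₁ - ξ₀
  have hρ : 0 < ρ := by linarith
  have hK : (1 : ℝ) ≤ 17 ^ (p + 2) := one_le_rpow (by norm_num) (by linarith)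
  have hΓ : 0 ≤ Γ := by simpa using (abs_nonneg _).trans (hG2 1 one_pos)
  have hbound : ∀ σ ∈ Icc (ρ ^ 2 / 4) (2 * ρ ^ 2), |g'' σ| ≤ 17 ^ (p + 2) * Γ * ρ ^ (p - 4) := by
    intro σ hσ
    have hσ₀ : 0 < σ := lt_of_lt_of_le (by positivity) hσ.1
    have := rpow_le_of_div_le_of_le_mul (σ := σ) (a := p / 2 - 2) (b := p + 2)
      (by norm_num : (1 : ℝ) ≤ 17) (by positivity : 0 < ρ ^ 2)
      (abs_le.mpr ⟨by linarith, by linarith⟩) (by linarith [hσ.1]) (by linarith [hσ.2])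
    rw [sq_rpow hρ.le, show 2 * (p / 2 - 2) = p - 4 by ring] at this
    calc |g'' σ| ≤ Γ * σ ^ (p / 2 - 2) := hG2 σ hσ₀
      _ ≤ Γ * (17 ^ (p + 2) * ρ ^ (p - 4)) := by gcongr
      _ = 17 ^ (p + 2) * Γ * ρ ^ (p - 4) := by ring
  have hholder : ∀ σ₁ ∈ Icc (ρ ^ 2 / 4) (2 * ρ ^ 2), ∀ σ₂ ∈ Icc (ρ ^ 2 / 4) (2 * ρ ^ 2),
      |g'' σ₁ - g'' σ₂| ≤ 17 ^ (p + 2) * Γ * ρ ^ (p - 4 - 2 * β) * |σ₁ - σ₂| ^ β := by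
    intro σ₁ h₁ σ₂ h₂
    refine (hG4 σ₁ h₁ σ₂ h₂).trans ?_
    gcongr
    exact le_mul_of_one_le_left hΓ hK
  have hstep : ∀ t ∈ Ico (0 : ℝ) 1,
      ‖radialFieldDeriv g' g'' ε (ξ₀ + t • η) η - radialFieldDeriv g' g'' ε ξ₀ η‖
        ≤ 20 * (17 ^ (p + 2) * Γ) * ρ ^ (p - 2 - β) * ‖η‖ ^ β * ‖η‖ := by
    intro t ht
    have hdt : ‖ξ₀ + t • η - ξ₀‖ ≤ ‖η‖ := by
      rw [add_sub_cancel_left, norm_smul, norm_eq_abs, abs_of_nonneg ht.1]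
      exact mul_le_of_le_one_left (norm_nonneg _) ht.2.le
    refine (norm_radialFieldDeriv_sub_le hg' (norm_pos_iff.mp hρ) (by rwa [abs_of_pos hε])
      (hdt.trans hξ₁) hβ hβ1 hbound hholder η).trans ?_
    gcongr
  have hξ₀η : ξ₀ + η = ξ₁ := add_sub_cancel ξ₀ ξ₁
  calc ‖radialFieldDeriv g' g'' ε ξ₀ η - (radialField g' ε ξ₁ - radialField g' ε ξ₀)‖
      ≤ 20 * (17 ^ (p + 2) * Γ) * ρ ^ (p - 2 - β) * ‖η‖ ^ β * ‖η‖ := by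
        simpa only [hξ₀η] using norm_radialFieldDeriv_sub_radialField_add_sub_le hg' hε.ne' hstep
    _ = 20 * 17 ^ (p + 2) * Γ * ρ ^ (p - 2 - β) * ‖η‖ ^ (1 + β) := by
        rw [rpow_one_add' (norm_nonneg _) (by linarith)]; ring

lemma norm_radialFieldDeriv_sub_radialField_sub_le_of_le_norm_sub (hp : 1 ≤ p) (hβ : 0 ≤ β)
    (hβ1 : β ≤ 1) (hG1 : ∀ σ, 0 < σ → |g' σ| ≤ Γ * σ ^ (p / 2 - 1))
    (hG2 : ∀ σ, 0 < σ → |g'' σ| ≤ Γ * σ ^ (p / 2 - 2)) (hε : 0 < ε) (hεξ₀ : ε ≤ ‖ξ₀‖ / 4)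
    (hξ₁ : ‖ξ₁‖ ≤ 4 * ‖ξ₀‖) (hξ₁ξ₀ : ‖ξ₀‖ ≤ 4 * ‖ξ₁ - ξ₀‖) :
    ‖radialFieldDeriv g' g'' ε ξ₀ (ξ₁ - ξ₀) - (radialField g' ε ξ₁ - radialField g' ε ξ₀)‖
      ≤ 44 * 17 ^ (p + 2) * Γ * ‖ξ₀‖ ^ (p - 2 - β) * ‖ξ₁ - ξ₀‖ ^ (1 + β) := by
  set ρ := ‖ξ₀‖
  set η := ξ₁ - ξ₀
  set K : ℝ := 17 ^ (p + 2)
  have hρ : 0 < ρ := by linarith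
  have hΓ : 0 ≤ Γ := by simpa using (abs_nonneg _).trans (hG1 1 one_pos)
  have hε2 : ε ^ 2 ≤ ρ ^ 2 / 16 := by nlinarith
  have hB : ‖radialFieldDeriv g' g'' ε ξ₀ η‖ ≤ 3 * Γ * (K * ρ ^ (p - 2)) * ‖η‖ := by
    refine (norm_radialFieldDeriv_le hG1 hG2 hε.ne' ξ₀ η).trans ?_
    have := rpow_le_of_div_le_of_le_mul (σ := ε ^ 2 + ρ ^ 2) (a := p / 2 - 1) (b := p + 2)
      (by norm_num : (1 : ℝ) ≤ 17) (by positivity : 0 < ρ ^ 2)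
      (abs_le.mpr ⟨by linarith, by linarith⟩) (by nlinarith) (by nlinarith)
    rw [sq_rpow hρ.le, show 2 * (p / 2 - 1) = p - 2 by ring] at this
    gcongr
  have hA : ∀ ξ : E, ‖ξ‖ ≤ 4 * ρ → ‖radialField g' ε ξ‖ ≤ Γ * (K * ρ ^ (p - 1)) := by
    intro ξ hξ
    refine (norm_radialField_le hG1 hε.ne' ξ).trans ?_
    have := rpow_le_of_le_mul (σ := ε ^ 2 + ‖ξ‖ ^ 2) (a := (p - 1) / 2) (b := p + 2)
      (by norm_num : (1 : ℝ) ≤ 17) (by positivity : 0 ≤ ρ ^ 2) (by positivity) (by linarith)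
      (by linarith) (by nlinarith [norm_nonneg ξ])
    rw [sq_rpow hρ.le, show 2 * ((p - 1) / 2) = p - 1 by ring] at this
    gcongr
  have h₁ : ρ ^ (p - 2) ≤ 4 * (ρ ^ (p - 2 - β) * ‖η‖ ^ β) :=
    (rpow_le_rpow_sub_mul_rpow hρ (by norm_num) (norm_nonneg _) hβ hξ₁ξ₀).trans
      (by gcongr; exact rpow_le_self_of_one_le (by norm_num) hβ1)
  have h₂ : ρ ^ (p - 1) ≤ 16 * (ρ ^ (p - 2 - β) * ‖η‖ ^ (1 + β)) := by
    have := rpow_le_rpow_sub_mul_rpow (a := p - 1) (β := 1 + β) hρ (by norm_num) (norm_nonneg _)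
      (by linarith) hξ₁ξ₀
    rw [show p - 1 - (1 + β) = p - 2 - β by ring] at this
    refine this.trans ?_
    gcongr
    calc (4 : ℝ) ^ (1 + β) ≤ 4 ^ (2 : ℝ) := rpow_le_rpow_of_exponent_le (by norm_num) (by linarith)
      _ = 16 := by norm_num
  calc ‖radialFieldDeriv g' g'' ε ξ₀ η - (radialField g' ε ξ₁ - radialField g' ε ξ₀)‖
      ≤ ‖radialFieldDeriv g' g'' ε ξ₀ η‖ + (‖radialField g' ε ξ₁‖ + ‖radialField g' ε ξ₀‖) :=
        (norm_sub_le _ _).trans (add_le_add_right (norm_sub_le _ _) _)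
    _ ≤ 3 * Γ * (K * ρ ^ (p - 2)) * ‖η‖ + (Γ * (K * ρ ^ (p - 1)) + Γ * (K * ρ ^ (p - 1))) := by
        gcongr
        exacts [hA ξ₁ hξ₁, hA ξ₀ (by linarith)]
    _ = 3 * Γ * K * ρ ^ (p - 2) * ‖η‖ + 2 * Γ * K * ρ ^ (p - 1) := by ring
    _ ≤ 3 * Γ * K * (4 * (ρ ^ (p - 2 - β) * ‖η‖ ^ β)) * ‖η‖
        + 2 * Γ * K * (16 * (ρ ^ (p - 2 - β) * ‖η‖ ^ (1 + β))) := by gcongr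
    _ = 44 * K * Γ * ρ ^ (p - 2 - β) * ‖η‖ ^ (1 + β) := by
        rw [rpow_one_add' (norm_nonneg _) (by linarith)]; ring

theorem norm_radialFieldDeriv_sub_radialField_sub_le (hp : 1 ≤ p) (hβ : 0 ≤ β) (hβ1 : β ≤ 1)
    (hg' : ∀ σ, 0 < σ → HasDerivAt g' (g'' σ) σ)
    (hG1 : ∀ σ, 0 < σ → |g' σ| ≤ Γ * σ ^ (p / 2 - 1))
    (hG2 : ∀ σ, 0 < σ → |g'' σ| ≤ Γ * σ ^ (p / 2 - 2))
    (hG4 : ∀ σ₁ ∈ Icc (‖ξ₀‖ ^ 2 / 4) (2 * ‖ξ₀‖ ^ 2), ∀ σ₂ ∈ Icc (‖ξ₀‖ ^ 2 / 4) (2 * ‖ξ₀‖ ^ 2),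
      |g'' σ₁ - g'' σ₂| ≤ Γ * ‖ξ₀‖ ^ (p - 4 - 2 * β) * |σ₁ - σ₂| ^ β)
    (hε : 0 < ε) (hεξ₀ : ε ≤ ‖ξ₀‖ / 4) (hξ₁ : ‖ξ₁‖ ≤ 4 * ‖ξ₀‖) :
    ‖radialFieldDeriv g' g'' ε ξ₀ (ξ₁ - ξ₀) - (radialField g' ε ξ₁ - radialField g' ε ξ₀)‖
      ≤ 44 * 17 ^ (p + 2) * Γ * ‖ξ₀‖ ^ (p - 2 - β) * ‖ξ₁ - ξ₀‖ ^ (1 + β) := by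
  rcases le_total ‖ξ₁ - ξ₀‖ (‖ξ₀‖ / 4) with hsmall | hlarge
  · have hΓ : 0 ≤ Γ := by simpa using (abs_nonneg _).trans (hG1 1 one_pos)
    refine (norm_radialFieldDeriv_sub_radialField_sub_le_of_norm_sub_le (by linarith) hβ hβ1 hg'
      hG2 hG4 hε hεξ₀ hsmall).trans ?_
    gcongr
    norm_num
  · exact norm_radialFieldDeriv_sub_radialField_sub_le_of_le_norm_sub hp hβ hβ1 hG1 hG2 hε hεξ₀
      hξ₁ (by linarith)

end RadialField

theorem stmt_5_general (k : ℕ) (p β₀ : ℝ)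
    (hp : 1 < p) (hβ₀ : 0 < β₀) (hβ₀' : β₀ ≤ 1) :
    ∃ C : ℝ, 0 < C ∧
      ∀ γ Γ : ℝ, 0 < γ → γ ≤ Γ →
      ∀ δ : ℝ, 0 < δ → δ < 1 →
      ∀ g g' g'' : ℝ → ℝ,
        (∀ σ : ℝ, 0 < σ → HasDerivAt g (g' σ) σ) →
        (∀ σ : ℝ, 0 < σ → HasDerivAt g' (g'' σ) σ) →
        ContinuousOn g'' (Set.Ioi 0) →
        (∀ σ : ℝ, 0 < σ → |g' σ| ≤ Γ * σ ^ (p / 2 - 1)) →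
        (∀ σ : ℝ, 0 < σ → |g'' σ| ≤ Γ * σ ^ (p / 2 - 2)) →
        (∀ σ : ℝ, 0 ≤ σ → ∀ τ : ℝ, 0 < τ → τ < 1 →
          γ * (σ + τ) ^ (p / 2 - 1) ≤ g' (σ + τ) + 2 * σ * min (g'' (σ + τ)) 0) →
        (∀ μ : ℝ, 0 < μ → ∀ σ₁ ∈ Set.Icc (μ ^ 2 / 4) (7 * μ ^ 2),
          ∀ σ₂ ∈ Set.Icc (μ ^ 2 / 4) (7 * μ ^ 2),
          |g'' σ₁ - g'' σ₂| ≤ Γ * μ ^ (p - 4 - 2 * β₀) * |σ₁ - σ₂| ^ β₀) →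
        ∀ ε : ℝ, 0 < ε → ε < δ / 4 →
        ∀ μ : ℝ, δ < μ →
        ∀ ξ₀ ξ₁ : EuclideanSpace ℝ (Fin k),
          δ + μ / 4 ≤ ‖ξ₀‖ → ‖ξ₀‖ ≤ δ + μ → ‖ξ₁‖ ≤ δ + μ →
          ‖(g' (ε ^ 2 + ‖ξ₀‖ ^ 2) • (ξ₁ - ξ₀)
              + (2 * g'' (ε ^ 2 + ‖ξ₀‖ ^ 2) * ⟪ξ₀, ξ₁ - ξ₀⟫) • ξ₀)
            - (g' (ε ^ 2 + ‖ξ₁‖ ^ 2) • ξ₁ - g' (ε ^ 2 + ‖ξ₀‖ ^ 2) • ξ₀)‖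
            ≤ C * Γ * μ ^ (p - 2 - β₀) * ‖ξ₁ - ξ₀‖ ^ (1 + β₀) := by
  refine ⟨44 * 17 ^ (p + 2) * 17 ^ (p + 2), by positivity, ?_⟩
  intro γ Γ hγ hγΓ δ hδ _ g g' g'' _ hg' _ hG1 hG2 _ hG4 ε hε hεδ μ hδμ ξ₀ ξ₁ h₀l h₀u h₁u
  have hμ : 0 < μ := hδ.trans hδμ
  have hρ : 0 < ‖ξ₀‖ := by linarith
  have hG4ρ := hG4 ‖ξ₀‖ hρ
  have hIcc : Icc (‖ξ₀‖ ^ 2 / 4) (2 * ‖ξ₀‖ ^ 2) ⊆ Icc (‖ξ₀‖ ^ 2 / 4) (7 * ‖ξ₀‖ ^ 2) :=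
    Icc_subset_Icc_right (by nlinarith)
  have hscale : ‖ξ₀‖ ^ (p - 2 - β₀) ≤ 17 ^ (p + 2) * μ ^ (p - 2 - β₀) :=
    rpow_le_of_div_le_of_le_mul (by norm_num) hμ (abs_le.mpr ⟨by linarith, by linarith⟩)
      (by linarith) (by linarith)
  calc _ ≤ 44 * 17 ^ (p + 2) * Γ * ‖ξ₀‖ ^ (p - 2 - β₀) * ‖ξ₁ - ξ₀‖ ^ (1 + β₀) :=
        norm_radialFieldDeriv_sub_radialField_sub_le hp.le hβ₀.le hβ₀' hg' hG1 hG2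
          (fun σ₁ h₁ σ₂ h₂ => hG4ρ σ₁ (hIcc h₁) σ₂ (hIcc h₂)) hε (by linarith) (by linarith)
    _ ≤ 44 * 17 ^ (p + 2) * Γ * (17 ^ (p + 2) * μ ^ (p - 2 - β₀)) * ‖ξ₁ - ξ₀‖ ^ (1 + β₀) := by
        have hΓ : 0 ≤ Γ := hγ.le.trans hγΓ
        gcongr
    _ = _ := by ring

/-- Hessian error estimate for the `p`-part: there exists `C > 0`, depending only on
`p` and `β₀`, such that for every `g` satisfying (G1)–(G4), every `0 < ε < δ/4`, every
`μ > δ`, and all `ξ₀, ξ₁` with `δ + μ/4 ≤ |ξ₀| ≤ δ + μ`, `|ξ₁| ≤ δ + μ`,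
`|ℬ_{p,ε}(ξ₀)(ξ₁ − ξ₀) − (A_{p,ε}(ξ₁) − A_{p,ε}(ξ₀))| ≤ C Γ μ^{p−2−β₀} |ξ₁ − ξ₀|^{1+β₀}`. -/
theorem stmt_5 (k : ℕ) (hk : 1 ≤ k) (p β₀ : ℝ)
    (hp : 1 < p) (hβ₀ : 0 < β₀) (hβ₀' : β₀ ≤ 1) :
    ∃ C : ℝ, 0 < C ∧
      ∀ γ Γ : ℝ, 0 < γ → γ ≤ Γ →
      ∀ δ : ℝ, 0 < δ → δ < 1 →
      ∀ g g' g'' : ℝ → ℝ,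
        (∀ σ : ℝ, 0 < σ → HasDerivAt g (g' σ) σ) →
        (∀ σ : ℝ, 0 < σ → HasDerivAt g' (g'' σ) σ) →
        ContinuousOn g'' (Set.Ioi 0) →
        (∀ σ : ℝ, 0 < σ → |g' σ| ≤ Γ * σ ^ (p / 2 - 1)) →
        (∀ σ : ℝ, 0 < σ → |g'' σ| ≤ Γ * σ ^ (p / 2 - 2)) →
        (∀ σ : ℝ, 0 ≤ σ → ∀ τ : ℝ, 0 < τ → τ < 1 →
          γ * (σ + τ) ^ (p / 2 - 1) ≤ g' (σ + τ) + 2 * σ * min (g'' (σ + τ)) 0) →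
        (∀ μ : ℝ, 0 < μ → ∀ σ₁ ∈ Set.Icc (μ ^ 2 / 4) (7 * μ ^ 2),
          ∀ σ₂ ∈ Set.Icc (μ ^ 2 / 4) (7 * μ ^ 2),
          |g'' σ₁ - g'' σ₂| ≤ Γ * μ ^ (p - 4 - 2 * β₀) * |σ₁ - σ₂| ^ β₀) →
        ∀ ε : ℝ, 0 < ε → ε < δ / 4 →
        ∀ μ : ℝ, δ < μ →
        ∀ ξ₀ ξ₁ : EuclideanSpace ℝ (Fin k),
          δ + μ / 4 ≤ ‖ξ₀‖ → ‖ξ₀‖ ≤ δ + μ → ‖ξ₁‖ ≤ δ + μ →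
          ‖(g' (ε ^ 2 + ‖ξ₀‖ ^ 2) • (ξ₁ - ξ₀)
              + (2 * g'' (ε ^ 2 + ‖ξ₀‖ ^ 2) * ⟪ξ₀, ξ₁ - ξ₀⟫) • ξ₀)
            - (g' (ε ^ 2 + ‖ξ₁‖ ^ 2) • ξ₁ - g' (ε ^ 2 + ‖ξ₀‖ ^ 2) • ξ₀)‖
            ≤ C * Γ * μ ^ (p - 2 - β₀) * ‖ξ₁ - ξ₀‖ ^ (1 + β₀) :=
  stmt_5_general k p β₀ hp hβ₀ hβ₀'
end

section
/- For every b > 0, every ε > 0, and all ξ₀, ξ₁ ∈ ℝ^k with (ξ₀, ξ₁) ≠ (0, 0), one has |A_{1,ε}(ξ₁) − A_{1,ε}(ξ₀)| ≤ 2b·|ξ₁ − ξ₀| / max{|ξ₀|, |ξ₁|}; equivalently, |A_{1,ε}(ξ₁) − A_{1,ε}(ξ₀)| ≤ 2b·min{|ξ₀|⁻¹, |ξ₁|⁻¹}·|ξ₁ − ξ₀|. -/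
/-!
Write `A ξ = φ(|ξ|) ξ` with `φ t = b / √(ε² + t²)`, and assume `|ξ₀| ≤ |ξ₁|`. Splitting
`A ξ₁ - A ξ₀ = φ(|ξ₁|) (ξ₁ - ξ₀) - (φ(|ξ₀|) - φ(|ξ₁|)) ξ₀`, the first term is at most
`φ(|ξ₁|) |ξ₁ - ξ₀|`; since `φ` decreases while `t φ(t)` increases, the second is at most
`(|ξ₁| - |ξ₀|) φ(|ξ₁|) ≤ φ(|ξ₁|) |ξ₁ - ξ₀|`. Finally `t φ(t) ≤ b` gives `φ(|ξ₁|) ≤ b / |ξ₁|`.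
-/

open Real

theorem norm_smul_sub_smul_le_two_mul {E : Type*} [SeminormedAddCommGroup E] [NormedSpace ℝ E]
    {x y : E} {a c : ℝ} (hc : 0 ≤ c) (hca : c ≤ a) (hxy : ‖x‖ * a ≤ ‖y‖ * c) :
    ‖c • y - a • x‖ ≤ 2 * c * ‖y - x‖ := by
  have hnorm : c * (‖y‖ - ‖x‖) ≤ c * ‖y - x‖ :=
    mul_le_mul_of_nonneg_left (norm_sub_norm_le y x) hc
  calc ‖c • y - a • x‖ = ‖c • (y - x) - (a - c) • x‖ := by congr 1; module
    _ ≤ c * ‖y - x‖ + (a - c) * ‖x‖ := by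
      refine (norm_sub_le _ _).trans_eq ?_
      rw [norm_smul, norm_smul, norm_of_nonneg hc, norm_of_nonneg (sub_nonneg.2 hca)]
    _ ≤ 2 * c * ‖y - x‖ := by linarith

section Weight

variable {b ε s t : ℝ}

theorem div_sqrt_sq_add_sq_le_of_le (hb : 0 ≤ b) (hε : ε ≠ 0) (hs : 0 ≤ s) (hst : s ≤ t) :
    b / √(ε ^ 2 + t ^ 2) ≤ b / √(ε ^ 2 + s ^ 2) :=
  div_le_div_of_nonneg_left hb (sqrt_pos.2 (by positivity)) (sqrt_le_sqrt (by gcongr))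

theorem mul_div_sqrt_sq_add_sq_le_mul_of_le (hb : 0 ≤ b) (hε : ε ≠ 0) (hs : 0 ≤ s) (hst : s ≤ t) :
    s * (b / √(ε ^ 2 + s ^ 2)) ≤ t * (b / √(ε ^ 2 + t ^ 2)) := by
  have ht : 0 ≤ t := hs.trans hst
  have hcross : s * √(ε ^ 2 + t ^ 2) ≤ t * √(ε ^ 2 + s ^ 2) :=
    calc s * √(ε ^ 2 + t ^ 2) = √(s ^ 2 * (ε ^ 2 + t ^ 2)) := by
          rw [sqrt_mul (sq_nonneg s), sqrt_sq hs]
      _ ≤ √(t ^ 2 * (ε ^ 2 + s ^ 2)) :=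
          sqrt_le_sqrt (by nlinarith [mul_le_mul hst hst hs ht])
      _ = t * √(ε ^ 2 + s ^ 2) := by rw [sqrt_mul (sq_nonneg t), sqrt_sq ht]
  rw [mul_div_assoc', mul_div_assoc', div_le_div_iff₀ (sqrt_pos.2 (by positivity))
    (sqrt_pos.2 (by positivity))]
  nlinarith [mul_le_mul_of_nonneg_left hcross hb]

theorem mul_div_sqrt_sq_add_sq_le (hb : 0 ≤ b) : t * (b / √(ε ^ 2 + t ^ 2)) ≤ b := by
  rw [mul_div_left_comm]
  refine mul_le_of_le_one_right hb (div_le_one_of_le₀ ?_ (sqrt_nonneg _))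
  exact (le_abs_self t).trans (abs_le_sqrt (by nlinarith))

end Weight

theorem norm_smul_div_sqrt_sub_le_of_norm_le {E : Type*} [SeminormedAddCommGroup E]
    [NormedSpace ℝ E] {b ε : ℝ} (hb : 0 ≤ b) (hε : ε ≠ 0) {x y : E} (hxy : ‖x‖ ≤ ‖y‖)
    (hy : 0 < ‖y‖) :
    ‖(b / √(ε ^ 2 + ‖y‖ ^ 2)) • y - (b / √(ε ^ 2 + ‖x‖ ^ 2)) • x‖ ≤ 2 * b * ‖y - x‖ / ‖y‖ := by
  have hweight : b / √(ε ^ 2 + ‖y‖ ^ 2) ≤ b / ‖y‖ :=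
    (le_div_iff₀ hy).2 (by rw [mul_comm]; exact mul_div_sqrt_sq_add_sq_le hb)
  calc _ ≤ 2 * (b / √(ε ^ 2 + ‖y‖ ^ 2)) * ‖y - x‖ :=
        norm_smul_sub_smul_le_two_mul (by positivity)
          (div_sqrt_sq_add_sq_le_of_le hb hε (norm_nonneg x) hxy)
          (mul_div_sqrt_sq_add_sq_le_mul_of_le hb hε (norm_nonneg x) hxy)
    _ ≤ 2 * (b / ‖y‖) * ‖y - x‖ := by gcongr
    _ = 2 * b * ‖y - x‖ / ‖y‖ := by ring

theorem stmt_9_general (k : ℕ) (b ε : ℝ) (hb : 0 < b) (hε : 0 < ε) :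
    ∀ ξ₀ ξ₁ : EuclideanSpace ℝ (Fin k), ¬(ξ₀ = 0 ∧ ξ₁ = 0) →
      ‖(b / Real.sqrt (ε ^ 2 + ‖ξ₁‖ ^ 2)) • ξ₁ - (b / Real.sqrt (ε ^ 2 + ‖ξ₀‖ ^ 2)) • ξ₀‖
        ≤ 2 * b * ‖ξ₁ - ξ₀‖ / max ‖ξ₀‖ ‖ξ₁‖ := by
  intro ξ₀ ξ₁ hne
  have hmax : 0 < max ‖ξ₀‖ ‖ξ₁‖ := by
    by_contra! h
    exact hne ⟨norm_le_zero_iff.1 (le_max_left _ _ |>.trans h),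
      norm_le_zero_iff.1 (le_max_right _ _ |>.trans h)⟩
  rcases le_total ‖ξ₀‖ ‖ξ₁‖ with h01 | h10
  · rw [max_eq_right h01] at hmax ⊢
    exact norm_smul_div_sqrt_sub_le_of_norm_le hb.le hε.ne' h01 hmax
  · rw [max_eq_left h10] at hmax ⊢
    rw [norm_sub_rev, norm_sub_rev ξ₁]
    exact norm_smul_div_sqrt_sub_le_of_norm_le hb.le hε.ne' h10 hmax

/-- Growth estimate for `A_{1,ε}(ξ) = b ξ/√(ε²+|ξ|²)`: for all `(ξ₀, ξ₁) ≠ (0, 0)`,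
`|A_{1,ε}(ξ₁) − A_{1,ε}(ξ₀)| ≤ 2b |ξ₁ − ξ₀| / max{|ξ₀|, |ξ₁|}`. -/
theorem stmt_9 (k : ℕ) (hk : 1 ≤ k) (b ε : ℝ) (hb : 0 < b) (hε : 0 < ε) :
    ∀ ξ₀ ξ₁ : EuclideanSpace ℝ (Fin k), ¬(ξ₀ = 0 ∧ ξ₁ = 0) →
      ‖(b / Real.sqrt (ε ^ 2 + ‖ξ₁‖ ^ 2)) • ξ₁ - (b / Real.sqrt (ε ^ 2 + ‖ξ₀‖ ^ 2)) • ξ₀‖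
        ≤ 2 * b * ‖ξ₁ - ξ₀‖ / max ‖ξ₀‖ ‖ξ₁‖ :=
  stmt_9_general k b ε hb hε
end

section
/- Assume 2 ≤ p < ∞. There exists a constant c > 0, depending only on p, such that for every g satisfying (G1)–(G3), every ε ∈ (0,1), and all ξ₀, ξ₁ ∈ ℝ^k, one has ⟨A_ε(ξ₁) − A_ε(ξ₀), ξ₁ − ξ₀⟩ ≥ c·γ·|ξ₁ − ξ₀|^p. -/
/-!
The saturation part `ξ ↦ b ξ / √(ε² + |ξ|²)` of `A_ε` is a radial field `ρ(|ξ|) ξ` with `ρ ≥ 0`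
and `s ↦ ρ(s) s` nondecreasing, and every such field is monotone, since by Cauchy–Schwarz
`⟨ρ(|x|) x - ρ(|y|) y, x - y⟩ ≥ (|x| - |y|) (ρ(|x|) |x| - ρ(|y|) |y|) ≥ 0`.

For the `p`-part write `η = ξ₁ - ξ₀`, `x(t) = ξ₀ + t η`, and `φ(t) = g'(ε² + |x(t)|²) ⟨x(t), η⟩`,
so that the inner product to be bounded is `φ(1) - φ(0)`. Condition (G3) with `σ = |x(t)|²`,
`τ = ε²`, combined with `⟨x(t), η⟩² ≤ |x(t)|² |η|²`, gives
`φ'(t) ≥ γ (ε² + |x(t)|²)^(p/2-1) |η|² ≥ 0`. Now `|x(t)| ≥ |t - t₀| |η|`, where `x(t₀)` is the point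
of the line closest to the origin, and `[0,1]` contains an interval of length `1/4` at distance
`≥ 1/4` from `t₀`. There `φ' ≥ γ (|η|/4)^(p-2) |η|²`, so the mean value theorem gives
`φ(1) - φ(0) ≥ γ (|η|/4)^(p-2) |η|² / 4 = 4^(1-p) γ |η|^p`.
-/

open Real RealInnerProductSpace Set

theorem monotoneOn_div_sqrt_add_sq_mul {b δ : ℝ} (hb : 0 ≤ b) (hδ : 0 < δ) :
    MonotoneOn (fun s => b / √(δ + s ^ 2) * s) (Ici 0) := by
  intro s (hs : 0 ≤ s) t (ht : 0 ≤ t) hst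
  have key : s * √(δ + t ^ 2) ≤ t * √(δ + s ^ 2) := by
    rw [← pow_le_pow_iff_left₀ (by positivity) (by positivity) two_ne_zero, mul_pow, mul_pow,
      sq_sqrt (by positivity), sq_sqrt (by positivity)]
    nlinarith [mul_le_mul hst hst hs ht]
  simp only [div_mul_eq_mul_div]
  rw [div_le_div_iff₀ (by positivity) (by positivity)]
  nlinarith [mul_le_mul_of_nonneg_left key hb]

theorem mul_le_add_of_le_add_mul_min {a d₁ d₂ σ u n : ℝ} (h : a ≤ d₁ + 2 * σ * min d₂ 0)
    (hu : u ^ 2 ≤ σ * n) (hn : 0 ≤ n) : a * n ≤ d₁ * n + 2 * d₂ * u ^ 2 := by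
  have h₁ : min d₂ 0 * (σ * n) ≤ min d₂ 0 * u ^ 2 :=
    mul_le_mul_of_nonpos_left hu (min_le_right _ _)
  have h₂ : min d₂ 0 * u ^ 2 ≤ d₂ * u ^ 2 :=
    mul_le_mul_of_nonneg_right (min_le_left _ _) (sq_nonneg u)
  nlinarith [mul_le_mul_of_nonneg_right h hn]

theorem rpow_sub_two_le_rpow_half_sub_one {p r S : ℝ} (hp : 2 ≤ p) (hr : 0 ≤ r)
    (hrS : r ^ 2 ≤ S) : r ^ (p - 2) ≤ S ^ (p / 2 - 1) := by
  calc r ^ (p - 2) = (r ^ 2) ^ (p / 2 - 1) := by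
        rw [← rpow_natCast, ← rpow_mul hr]; ring_nf
    _ ≤ S ^ (p / 2 - 1) := rpow_le_rpow (by positivity) hrS (by linarith)

theorem four_rpow_one_sub_mul_rpow {p r : ℝ} (hp : p ≠ 0) (hr : 0 ≤ r) :
    4 ^ (1 - p) * r ^ p = (r / 4) ^ (p - 2) * r ^ 2 / 4 := by
  have hsplit : r ^ p = r ^ (p - 2) * r ^ 2 := by
    rw [← rpow_natCast, ← rpow_add' hr (by norm_num [hp])]
    norm_num
  have hfour : (4 : ℝ) ^ (1 - p) * 4 ^ (p - 2) = 4⁻¹ := by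
    rw [← rpow_add (by norm_num)]
    norm_num
  rw [div_rpow hr (by norm_num), hsplit]
  field_simp
  linear_combination (4 * r ^ (p - 2) * r ^ 2) * hfour

theorem exists_Icc_quarter_subset_unitInterval_away (t₀ : ℝ) :
    ∃ a, 0 ≤ a ∧ a + 1 / 4 ≤ 1 ∧ ∀ t ∈ Icc a (a + 1 / 4), 1 / 4 ≤ |t - t₀| := by
  rcases le_or_gt t₀ (1 / 2) with h | h
  · refine ⟨3 / 4, by norm_num, by norm_num, fun t ht => ?_⟩
    rw [abs_of_nonneg (by linarith [ht.1])]
    linarith [ht.1]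
  · refine ⟨0, le_rfl, by norm_num, fun t ht => ?_⟩
    rw [abs_sub_comm, abs_of_nonneg (by linarith [ht.2])]
    linarith [ht.2]

theorem mul_sub_le_sub_of_hasDerivAt_s10 {φ φ' : ℝ → ℝ} (hφ : ∀ t, HasDerivAt φ (φ' t) t)
    (hφ'_nonneg : ∀ t, 0 ≤ φ' t) {x a b y m : ℝ} (hxa : x ≤ a) (hab : a ≤ b) (hby : b ≤ y)
    (hm : ∀ t ∈ Icc a b, m ≤ φ' t) : m * (b - a) ≤ φ y - φ x := by
  have hmono : Monotone φ := monotone_of_deriv_nonneg (fun t => (hφ t).differentiableAt)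
    (fun t => (hφ t).deriv ▸ hφ'_nonneg t)
  have hmid := (convex_Icc a b).mul_sub_le_image_sub_of_le_deriv
    (fun t _ => (hφ t).continuousAt.continuousWithinAt)
    (fun t _ => (hφ t).differentiableAt.differentiableWithinAt)
    (fun t ht => (hφ t).deriv ▸ hm t (interior_subset ht))
    a (left_mem_Icc.2 hab) b (right_mem_Icc.2 hab) hab
  linarith [hmono hxa, hmono hby]

section InnerProductSpace

variable {E : Type*} [NormedAddCommGroup E] [InnerProductSpace ℝ E]

theorem inner_smul_sub_smul_nonneg {ρ : ℝ → ℝ} (hρ : ∀ s, 0 ≤ s → 0 ≤ ρ s)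
    (hmono : MonotoneOn (fun s => ρ s * s) (Ici 0)) (x y : E) :
    0 ≤ ⟪ρ ‖x‖ • x - ρ ‖y‖ • y, x - y⟫ := by
  have hsign : 0 ≤ (‖x‖ - ‖y‖) * (ρ ‖x‖ * ‖x‖ - ρ ‖y‖ * ‖y‖) := by
    rcases le_total ‖x‖ ‖y‖ with h | h
    · exact mul_nonneg_of_nonpos_of_nonpos (sub_nonpos.2 h)
        (sub_nonpos.2 (hmono (norm_nonneg x) (norm_nonneg y) h))
    · exact mul_nonneg (sub_nonneg.2 h)
        (sub_nonneg.2 (hmono (norm_nonneg y) (norm_nonneg x) h))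
  have hsum : 0 ≤ ρ ‖x‖ + ρ ‖y‖ := add_nonneg (hρ _ (norm_nonneg x)) (hρ _ (norm_nonneg y))
  have hexpand : ⟪ρ ‖x‖ • x - ρ ‖y‖ • y, x - y⟫ =
      ρ ‖x‖ * ‖x‖ ^ 2 + ρ ‖y‖ * ‖y‖ ^ 2 - (ρ ‖x‖ + ρ ‖y‖) * ⟪x, y⟫ := by
    simp only [inner_sub_left, inner_sub_right, real_inner_smul_left,
      real_inner_self_eq_norm_sq, real_inner_comm x y]
    ring
  rw [hexpand]
  nlinarith [mul_le_mul_of_nonneg_left (real_inner_le_norm x y) hsum]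

theorem abs_add_inner_div_mul_norm_le (x η : E) (t : ℝ) :
    |t + ⟪x, η⟫ / ‖η‖ ^ 2| * ‖η‖ ≤ ‖x + t • η‖ := by
  rcases eq_or_ne η 0 with rfl | hη
  · simp
  have hη' : 0 < ‖η‖ := norm_pos_iff.2 hη
  have hinner : ⟪x + t • η, η⟫ = (t + ⟪x, η⟫ / ‖η‖ ^ 2) * ‖η‖ ^ 2 := by
    rw [inner_add_left, real_inner_smul_left, real_inner_self_eq_norm_sq]
    field_simp
    ring
  have hcs := abs_real_inner_le_norm (x + t • η) η
  rw [hinner, abs_mul, abs_of_nonneg (sq_nonneg ‖η‖)] at hcs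
  exact le_of_mul_le_mul_right (by linarith) hη'

theorem hasDerivAt_inner_smul_segment_s10 {g' g'' : ℝ → ℝ} {δ : ℝ} (x η : E) (t : ℝ)
    (hg' : HasDerivAt g' (g'' (δ + ‖x + t • η‖ ^ 2)) (δ + ‖x + t • η‖ ^ 2)) :
    HasDerivAt (fun s => g' (δ + ‖x + s • η‖ ^ 2) * ⟪x + s • η, η⟫)
      (g' (δ + ‖x + t • η‖ ^ 2) * ‖η‖ ^ 2
        + 2 * g'' (δ + ‖x + t • η‖ ^ 2) * ⟪x + t • η, η⟫ ^ 2) t := by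
  have hseg : HasDerivAt (fun s : ℝ => x + s • η) η t := by
    simpa using ((hasDerivAt_id t).smul_const η).const_add x
  have hS := hseg.norm_sq.const_add δ
  have := (hg'.comp t hS).mul (hseg.inner ℝ (hasDerivAt_const t η))
  refine this.congr_deriv ?_
  simp only [Function.comp_apply, inner_zero_right, zero_add, real_inner_self_eq_norm_sq]
  ring

theorem mul_norm_sub_rpow_le_inner_smul_sub_smul {g' g'' : ℝ → ℝ} {δ γ p : ℝ} (hδ : 0 < δ)
    (hγ : 0 ≤ γ) (hp : 2 ≤ p) (hg' : ∀ σ, 0 < σ → HasDerivAt g' (g'' σ) σ)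
    (hG3 : ∀ σ, 0 ≤ σ → γ * (σ + δ) ^ (p / 2 - 1) ≤ g' (σ + δ) + 2 * σ * min (g'' (σ + δ)) 0)
    (ξ₀ ξ₁ : E) :
    4 ^ (1 - p) * γ * ‖ξ₁ - ξ₀‖ ^ p ≤
      ⟪g' (δ + ‖ξ₁‖ ^ 2) • ξ₁ - g' (δ + ‖ξ₀‖ ^ 2) • ξ₀, ξ₁ - ξ₀⟫ := by
  set η := ξ₁ - ξ₀
  set S : ℝ → ℝ := fun t => δ + ‖ξ₀ + t • η‖ ^ 2
  set φ' : ℝ → ℝ := fun t =>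
    g' (S t) * ‖η‖ ^ 2 + 2 * g'' (S t) * ⟪ξ₀ + t • η, η⟫ ^ 2
  have hderiv : ∀ t, HasDerivAt (fun s => g' (S s) * ⟪ξ₀ + s • η, η⟫) (φ' t) t := fun t =>
    hasDerivAt_inner_smul_segment_s10 ξ₀ η t (hg' _ (by positivity))
  have hφ'_ge : ∀ t, γ * S t ^ (p / 2 - 1) * ‖η‖ ^ 2 ≤ φ' t := fun t => by
    refine mul_le_add_of_le_add_mul_min (σ := ‖ξ₀ + t • η‖ ^ 2) ?_ ?_ (sq_nonneg _)
    · simpa only [S, add_comm δ] using hG3 _ (sq_nonneg ‖ξ₀ + t • η‖)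
    · rw [← mul_pow, ← sq_abs]
      exact pow_le_pow_left₀ (abs_nonneg _) (abs_real_inner_le_norm _ _) 2
  have hφ'_nonneg : ∀ t, 0 ≤ φ' t := fun t => le_trans (by positivity) (hφ'_ge t)
  obtain ⟨a, ha₀, ha₁, haway⟩ :=
    exists_Icc_quarter_subset_unitInterval_away (-(⟪ξ₀, η⟫ / ‖η‖ ^ 2))
  have hφ'_away : ∀ t ∈ Icc a (a + 1 / 4), γ * (‖η‖ / 4) ^ (p - 2) * ‖η‖ ^ 2 ≤ φ' t := by
    intro t ht
    have hdist := abs_add_inner_div_mul_norm_le ξ₀ η t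
    have hquarter := haway t ht
    rw [sub_neg_eq_add] at hquarter
    have hnorm : ‖η‖ / 4 ≤ ‖ξ₀ + t • η‖ := by nlinarith [norm_nonneg η]
    have hpow : (‖η‖ / 4) ^ (p - 2) ≤ S t ^ (p / 2 - 1) :=
      rpow_sub_two_le_rpow_half_sub_one hp (by positivity)
        (by nlinarith [pow_le_pow_left₀ (by positivity) hnorm 2])
    exact le_trans (by gcongr) (hφ'_ge t)
  have hmvt := mul_sub_le_sub_of_hasDerivAt_s10 hderiv hφ'_nonneg ha₀ (by linarith) ha₁ hφ'_away
  simp only [S, one_smul, zero_smul, add_zero, η, add_sub_cancel] at hmvt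
  rw [inner_sub_left, real_inner_smul_left, real_inner_smul_left, mul_right_comm,
    four_rpow_one_sub_mul_rpow (by linarith) (norm_nonneg _)]
  linarith

end InnerProductSpace

theorem stmt_10_general (k : ℕ) (p : ℝ) (hp : 2 ≤ p) :
    ∃ c : ℝ, 0 < c ∧
      ∀ b : ℝ, 0 < b →
      ∀ γ Γ : ℝ, 0 < γ → γ ≤ Γ →
      ∀ g g' g'' : ℝ → ℝ,
        (∀ σ : ℝ, 0 < σ → HasDerivAt g (g' σ) σ) →
        (∀ σ : ℝ, 0 < σ → HasDerivAt g' (g'' σ) σ) →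
        ContinuousOn g'' (Set.Ioi 0) →
        (∀ σ : ℝ, 0 < σ → |g' σ| ≤ Γ * σ ^ (p / 2 - 1)) →
        (∀ σ : ℝ, 0 < σ → |g'' σ| ≤ Γ * σ ^ (p / 2 - 2)) →
        (∀ σ : ℝ, 0 ≤ σ → ∀ τ : ℝ, 0 < τ → τ < 1 →
          γ * (σ + τ) ^ (p / 2 - 1) ≤ g' (σ + τ) + 2 * σ * min (g'' (σ + τ)) 0) →
        ∀ ε : ℝ, 0 < ε → ε < 1 →
        ∀ ξ₀ ξ₁ : EuclideanSpace ℝ (Fin k),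
          c * γ * ‖ξ₁ - ξ₀‖ ^ p ≤
            ⟪((b / Real.sqrt (ε ^ 2 + ‖ξ₁‖ ^ 2)) • ξ₁ + g' (ε ^ 2 + ‖ξ₁‖ ^ 2) • ξ₁)
              - ((b / Real.sqrt (ε ^ 2 + ‖ξ₀‖ ^ 2)) • ξ₀ + g' (ε ^ 2 + ‖ξ₀‖ ^ 2) • ξ₀),
              ξ₁ - ξ₀⟫ := by
  refine ⟨4 ^ (1 - p), by positivity, ?_⟩
  intro b hb γ _ hγ _ _ g' g'' _ hg' _ _ _ hG3 ε hε hε₁ ξ₀ ξ₁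
  have hsaturation : 0 ≤ ⟪(b / √(ε ^ 2 + ‖ξ₁‖ ^ 2)) • ξ₁ - (b / √(ε ^ 2 + ‖ξ₀‖ ^ 2)) • ξ₀,
      ξ₁ - ξ₀⟫ :=
    inner_smul_sub_smul_nonneg (ρ := fun s => b / √(ε ^ 2 + s ^ 2)) (fun _ _ => by positivity)
      (monotoneOn_div_sqrt_add_sq_mul hb.le (by positivity)) ξ₁ ξ₀
  have hgrowth := mul_norm_sub_rpow_le_inner_smul_sub_smul (by positivity) hγ.le hp hg'
    (fun σ hσ => hG3 σ hσ (ε ^ 2) (by positivity) (by nlinarith)) ξ₀ ξ₁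
  rw [add_sub_add_comm, inner_add_left]
  linarith

/-- Monotonicity estimate for `A_ε` when `2 ≤ p`: there exists `c > 0`, depending only
on `p`, such that for every `b > 0`, every `g` satisfying (G1)–(G3), every `ε ∈ (0,1)`,
and all `ξ₀, ξ₁`, one has `⟨A_ε(ξ₁) − A_ε(ξ₀), ξ₁ − ξ₀⟩ ≥ c γ |ξ₁ − ξ₀|^p`. -/
theorem stmt_10 (k : ℕ) (hk : 1 ≤ k) (p : ℝ) (hp : 2 ≤ p) :
    ∃ c : ℝ, 0 < c ∧
      ∀ b : ℝ, 0 < b →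
      ∀ γ Γ : ℝ, 0 < γ → γ ≤ Γ →
      ∀ g g' g'' : ℝ → ℝ,
        (∀ σ : ℝ, 0 < σ → HasDerivAt g (g' σ) σ) →
        (∀ σ : ℝ, 0 < σ → HasDerivAt g' (g'' σ) σ) →
        ContinuousOn g'' (Set.Ioi 0) →
        (∀ σ : ℝ, 0 < σ → |g' σ| ≤ Γ * σ ^ (p / 2 - 1)) →
        (∀ σ : ℝ, 0 < σ → |g'' σ| ≤ Γ * σ ^ (p / 2 - 2)) →
        (∀ σ : ℝ, 0 ≤ σ → ∀ τ : ℝ, 0 < τ → τ < 1 →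
          γ * (σ + τ) ^ (p / 2 - 1) ≤ g' (σ + τ) + 2 * σ * min (g'' (σ + τ)) 0) →
        ∀ ε : ℝ, 0 < ε → ε < 1 →
        ∀ ξ₀ ξ₁ : EuclideanSpace ℝ (Fin k),
          c * γ * ‖ξ₁ - ξ₀‖ ^ p ≤
            ⟪((b / Real.sqrt (ε ^ 2 + ‖ξ₁‖ ^ 2)) • ξ₁ + g' (ε ^ 2 + ‖ξ₁‖ ^ 2) • ξ₁)
              - ((b / Real.sqrt (ε ^ 2 + ‖ξ₀‖ ^ 2)) • ξ₀ + g' (ε ^ 2 + ‖ξ₀‖ ^ 2) • ξ₀),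
              ξ₁ - ξ₀⟫ :=
  stmt_10_general k p hp
end

section
/- Assume 1 < p < 2. There exists a constant C > 0, depending only on p, such that for every g satisfying (G1)–(G3), every ε ∈ (0,1), and all ξ₀, ξ₁ ∈ ℝ^k with (ξ₀, ξ₁) ≠ (0, 0), one has |A_{p,ε}(ξ₁) − A_{p,ε}(ξ₀)| ≤ C·Γ·max{|ξ₀|, |ξ₁|}^{p−2}·|ξ₁ − ξ₀| (since p − 2 < 0, max{|ξ₀|,|ξ₁|}^{p−2} equals min{|ξ₀|^{p−2}, |ξ₁|^{p−2}}). -/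
/-!
Write `A ξ = g' (ε² + |ξ|²) ξ` and assume `|ξ₀| ≤ |ξ₁| = b`. Growth condition (G1) gives
`|A ξ| ≤ Γ |ξ|^{p-1}`, which settles the case `b ≤ 2 |ξ₁ - ξ₀|`. Otherwise both norms lie in
`[b/2, b]`, and splitting `A ξ₁ - A ξ₀ = g'(s₁) (ξ₁ - ξ₀) + (g'(s₁) - g'(s₀)) ξ₀` the first
term is controlled by (G1) and the second by the mean value theorem with (G2), since
`sᵢ = ε² + |ξᵢ|²` satisfy `|s₁ - s₀| = ||ξ₁|² - |ξ₀|²| ≤ 2b |ξ₁ - ξ₀|`.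
-/

open Real

lemma rpow_le_rpow_two_mul_of_sq_le {r σ e : ℝ} (hr : 0 < r) (h : r ^ 2 ≤ σ) (he : e ≤ 0) :
    σ ^ e ≤ r ^ (2 * e) :=
  calc σ ^ e ≤ (r ^ 2) ^ e := rpow_le_rpow_of_nonpos (by positivity) h he
    _ = r ^ (2 * e) := by rw [← rpow_natCast_mul hr.le]; norm_num

lemma abs_le_mul_rpow_two_mul_of_sq_le {f : ℝ → ℝ} {Γ e r σ : ℝ} (hΓ : 0 ≤ Γ) (he : e ≤ 0)
    (hf : ∀ σ, 0 < σ → |f σ| ≤ Γ * σ ^ e) (hr : 0 < r) (h : r ^ 2 ≤ σ) :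
    |f σ| ≤ Γ * r ^ (2 * e) :=
  (hf σ ((pow_pos hr 2).trans_le h)).trans
    (mul_le_mul_of_nonneg_left (rpow_le_rpow_two_mul_of_sq_le hr h he) hΓ)

lemma rpow_half_le {b p : ℝ} (hb : 0 ≤ b) (hp : 1 ≤ p) : (b / 2) ^ (p - 2) ≤ 2 * b ^ (p - 2) := by
  have h2 : (2 : ℝ)⁻¹ ^ (p - 2) ≤ 2 := by
    rw [inv_rpow zero_le_two, ← rpow_neg zero_le_two]
    simpa using rpow_le_rpow_of_exponent_le one_le_two (show -(p - 2) ≤ 1 by linarith)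
  rw [div_eq_mul_inv, mul_rpow hb (by norm_num), mul_comm 2]
  exact mul_le_mul_of_nonneg_left h2 (rpow_nonneg hb _)

section

variable {g' g'' : ℝ → ℝ} {Γ p : ℝ}

lemma abs_le_mul_rpow_of_sq_le (hΓ : 0 ≤ Γ) (hp : p ≤ 2)
    (hG1 : ∀ σ, 0 < σ → |g' σ| ≤ Γ * σ ^ (p / 2 - 1)) {r σ : ℝ} (hr : 0 < r) (h : r ^ 2 ≤ σ) :
    |g' σ| ≤ Γ * r ^ (p - 2) := by
  have := abs_le_mul_rpow_two_mul_of_sq_le hΓ (by linarith) hG1 hr h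
  rwa [show 2 * (p / 2 - 1) = p - 2 by ring] at this

lemma abs_sub_le_mul_rpow_of_sq_le (hΓ : 0 ≤ Γ) (hp : p ≤ 4)
    (hder : ∀ σ, 0 < σ → HasDerivAt g' (g'' σ) σ)
    (hG2 : ∀ σ, 0 < σ → |g'' σ| ≤ Γ * σ ^ (p / 2 - 2)) {r s t : ℝ} (hr : 0 < r)
    (hs : r ^ 2 ≤ s) (ht : r ^ 2 ≤ t) :
    |g' t - g' s| ≤ Γ * r ^ (p - 4) * |t - s| := by
  refine Convex.norm_image_sub_le_of_norm_hasDerivWithin_le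
    (fun σ hσ => (hder σ ((pow_pos hr 2).trans_le hσ)).hasDerivWithinAt) (fun σ hσ => ?_)
    (convex_Ici _) hs ht
  have := abs_le_mul_rpow_two_mul_of_sq_le hΓ (by linarith) hG2 hr hσ
  rwa [show 2 * (p / 2 - 2) = p - 4 by ring] at this

variable {E : Type*} [NormedAddCommGroup E] [NormedSpace ℝ E] {ε : ℝ}

lemma norm_smul_le_mul_rpow_of_norm_le (hΓ : 0 ≤ Γ) (hp1 : 1 ≤ p) (hp2 : p ≤ 2)
    (hG1 : ∀ σ, 0 < σ → |g' σ| ≤ Γ * σ ^ (p / 2 - 1)) {ξ : E} {b : ℝ} (hξ : ‖ξ‖ ≤ b) :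
    ‖g' (ε ^ 2 + ‖ξ‖ ^ 2) • ξ‖ ≤ Γ * b ^ (p - 1) := by
  rcases eq_or_ne ξ 0 with rfl | hξ0
  · simpa using mul_nonneg hΓ (rpow_nonneg (norm_zero (E := E) ▸ hξ) _)
  have hr := norm_pos_iff.2 hξ0
  calc ‖g' (ε ^ 2 + ‖ξ‖ ^ 2) • ξ‖ = |g' (ε ^ 2 + ‖ξ‖ ^ 2)| * ‖ξ‖ := by
        rw [norm_smul, Real.norm_eq_abs]
    _ ≤ Γ * ‖ξ‖ ^ (p - 2) * ‖ξ‖ := by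
        gcongr
        exact abs_le_mul_rpow_of_sq_le hΓ hp2 hG1 hr (le_add_of_nonneg_left (sq_nonneg ε))
    _ = Γ * ‖ξ‖ ^ (p - 1) := by
        rw [mul_assoc, ← rpow_add_one hr.ne']; ring_nf
    _ ≤ Γ * b ^ (p - 1) := by
        gcongr

lemma norm_smul_sub_smul_le_of_comparable (hΓ : 0 ≤ Γ) (hp : p ≤ 2)
    (hder : ∀ σ, 0 < σ → HasDerivAt g' (g'' σ) σ)
    (hG1 : ∀ σ, 0 < σ → |g' σ| ≤ Γ * σ ^ (p / 2 - 1))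
    (hG2 : ∀ σ, 0 < σ → |g'' σ| ≤ Γ * σ ^ (p / 2 - 2)) {ξ₀ ξ₁ : E} {r : ℝ} (hr : 0 < r)
    (h₀ : r ≤ ‖ξ₀‖) (h₀' : ‖ξ₀‖ ≤ 2 * r) (h₁ : r ≤ ‖ξ₁‖) (h₁' : ‖ξ₁‖ ≤ 2 * r) :
    ‖g' (ε ^ 2 + ‖ξ₁‖ ^ 2) • ξ₁ - g' (ε ^ 2 + ‖ξ₀‖ ^ 2) • ξ₀‖
      ≤ 9 * Γ * r ^ (p - 2) * ‖ξ₁ - ξ₀‖ := by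
  set s₀ := ε ^ 2 + ‖ξ₀‖ ^ 2
  set s₁ := ε ^ 2 + ‖ξ₁‖ ^ 2
  have hs₀ : r ^ 2 ≤ s₀ := by nlinarith [sq_nonneg ε]
  have hs₁ : r ^ 2 ≤ s₁ := by nlinarith [sq_nonneg ε]
  have hs : |s₁ - s₀| ≤ 4 * r * ‖ξ₁ - ξ₀‖ := by
    rw [show s₁ - s₀ = (‖ξ₁‖ + ‖ξ₀‖) * (‖ξ₁‖ - ‖ξ₀‖) by ring, abs_mul,
      abs_of_nonneg (by positivity)]
    have := abs_norm_sub_norm_le ξ₁ ξ₀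
    have : 0 ≤ ‖ξ₁ - ξ₀‖ := norm_nonneg _
    nlinarith
  have hpow : r ^ (p - 4) * r ^ 2 = r ^ (p - 2) := by
    rw [← rpow_natCast, ← rpow_add hr]; ring_nf
  calc ‖g' s₁ • ξ₁ - g' s₀ • ξ₀‖ = ‖g' s₁ • (ξ₁ - ξ₀) + (g' s₁ - g' s₀) • ξ₀‖ := by
        rw [smul_sub, sub_smul]; abel_nf
    _ ≤ |g' s₁| * ‖ξ₁ - ξ₀‖ + |g' s₁ - g' s₀| * ‖ξ₀‖ := by
        simpa only [norm_smul, Real.norm_eq_abs] using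
          norm_add_le (g' s₁ • (ξ₁ - ξ₀)) ((g' s₁ - g' s₀) • ξ₀)
    _ ≤ Γ * r ^ (p - 2) * ‖ξ₁ - ξ₀‖ + Γ * r ^ (p - 4) * (4 * r * ‖ξ₁ - ξ₀‖) * (2 * r) := by
        gcongr
        · exact abs_le_mul_rpow_of_sq_le hΓ hp hG1 hr hs₁
        · exact (abs_sub_le_mul_rpow_of_sq_le hΓ (by linarith) hder hG2 hr hs₀ hs₁).trans
            (by gcongr)
    _ = 9 * Γ * r ^ (p - 2) * ‖ξ₁ - ξ₀‖ := by
        linear_combination 8 * Γ * ‖ξ₁ - ξ₀‖ * hpow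

lemma norm_smul_sub_smul_le_of_norm_le (hΓ : 0 ≤ Γ) (hp1 : 1 ≤ p) (hp2 : p ≤ 2)
    (hder : ∀ σ, 0 < σ → HasDerivAt g' (g'' σ) σ)
    (hG1 : ∀ σ, 0 < σ → |g' σ| ≤ Γ * σ ^ (p / 2 - 1))
    (hG2 : ∀ σ, 0 < σ → |g'' σ| ≤ Γ * σ ^ (p / 2 - 2)) {ξ₀ ξ₁ : E} (hne : ξ₁ ≠ 0)
    (hle : ‖ξ₀‖ ≤ ‖ξ₁‖) :
    ‖g' (ε ^ 2 + ‖ξ₁‖ ^ 2) • ξ₁ - g' (ε ^ 2 + ‖ξ₀‖ ^ 2) • ξ₀‖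
      ≤ 18 * Γ * ‖ξ₁‖ ^ (p - 2) * ‖ξ₁ - ξ₀‖ := by
  have hb := norm_pos_iff.2 hne
  have hd : 0 ≤ Γ * ‖ξ₁‖ ^ (p - 2) * ‖ξ₁ - ξ₀‖ := by positivity
  by_cases hfar : ‖ξ₁‖ ≤ 2 * ‖ξ₁ - ξ₀‖
  · have hpow : ‖ξ₁‖ ^ (p - 1) = ‖ξ₁‖ ^ (p - 2) * ‖ξ₁‖ := by
      rw [← rpow_add_one hb.ne']; ring_nf
    calc _ ≤ ‖g' (ε ^ 2 + ‖ξ₁‖ ^ 2) • ξ₁‖ + ‖g' (ε ^ 2 + ‖ξ₀‖ ^ 2) • ξ₀‖ := norm_sub_le _ _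
      _ ≤ Γ * ‖ξ₁‖ ^ (p - 1) + Γ * ‖ξ₁‖ ^ (p - 1) := by
          gcongr
          · exact norm_smul_le_mul_rpow_of_norm_le hΓ hp1 hp2 hG1 le_rfl
          · exact norm_smul_le_mul_rpow_of_norm_le hΓ hp1 hp2 hG1 hle
      _ = 2 * (Γ * ‖ξ₁‖ ^ (p - 2)) * ‖ξ₁‖ := by rw [hpow]; ring
      _ ≤ 2 * (Γ * ‖ξ₁‖ ^ (p - 2)) * (2 * ‖ξ₁ - ξ₀‖) := by gcongr
      _ ≤ 18 * Γ * ‖ξ₁‖ ^ (p - 2) * ‖ξ₁ - ξ₀‖ := by linarith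
  · have hnear : ‖ξ₁‖ - ‖ξ₀‖ ≤ ‖ξ₁ - ξ₀‖ := norm_sub_norm_le ξ₁ ξ₀
    calc _ ≤ 9 * Γ * (‖ξ₁‖ / 2) ^ (p - 2) * ‖ξ₁ - ξ₀‖ :=
          norm_smul_sub_smul_le_of_comparable hΓ hp2 hder hG1 hG2 (by positivity)
            (by linarith) (by linarith) (by linarith) (by linarith)
      _ ≤ 9 * Γ * (2 * ‖ξ₁‖ ^ (p - 2)) * ‖ξ₁ - ξ₀‖ := by
          gcongr
          exact rpow_half_le hb.le hp1
      _ = 18 * Γ * ‖ξ₁‖ ^ (p - 2) * ‖ξ₁ - ξ₀‖ := by ring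

end

theorem stmt_12_general (k : ℕ) (p : ℝ) (hp : 1 < p) (hp2 : p < 2) :
    ∃ C : ℝ, 0 < C ∧
      ∀ γ Γ : ℝ, 0 < γ → γ ≤ Γ →
      ∀ g g' g'' : ℝ → ℝ,
        (∀ σ : ℝ, 0 < σ → HasDerivAt g (g' σ) σ) →
        (∀ σ : ℝ, 0 < σ → HasDerivAt g' (g'' σ) σ) →
        ContinuousOn g'' (Set.Ioi 0) →
        (∀ σ : ℝ, 0 < σ → |g' σ| ≤ Γ * σ ^ (p / 2 - 1)) →
        (∀ σ : ℝ, 0 < σ → |g'' σ| ≤ Γ * σ ^ (p / 2 - 2)) →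
        (∀ σ : ℝ, 0 ≤ σ → ∀ τ : ℝ, 0 < τ → τ < 1 →
          γ * (σ + τ) ^ (p / 2 - 1) ≤ g' (σ + τ) + 2 * σ * min (g'' (σ + τ)) 0) →
        ∀ ε : ℝ, 0 < ε → ε < 1 →
        ∀ ξ₀ ξ₁ : EuclideanSpace ℝ (Fin k), ¬(ξ₀ = 0 ∧ ξ₁ = 0) →
          ‖g' (ε ^ 2 + ‖ξ₁‖ ^ 2) • ξ₁ - g' (ε ^ 2 + ‖ξ₀‖ ^ 2) • ξ₀‖
            ≤ C * Γ * (max ‖ξ₀‖ ‖ξ₁‖) ^ (p - 2) * ‖ξ₁ - ξ₀‖ := by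
  refine ⟨18, by norm_num, fun γ Γ hγ hγΓ g g' g'' _ hder _ hG1 hG2 _ ε _ _ ξ₀ ξ₁ hne => ?_⟩
  have hΓ : 0 ≤ Γ := by linarith
  rcases le_total ‖ξ₀‖ ‖ξ₁‖ with hle | hle
  · have hξ₁ : ξ₁ ≠ 0 := fun h => hne ⟨norm_le_zero_iff.1 (by simpa [h] using hle), h⟩
    rw [max_eq_right hle]
    exact norm_smul_sub_smul_le_of_norm_le hΓ hp.le hp2.le hder hG1 hG2 hξ₁ hle
  · have hξ₀ : ξ₀ ≠ 0 := fun h => hne ⟨h, norm_le_zero_iff.1 (by simpa [h] using hle)⟩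
    rw [max_eq_left hle, norm_sub_rev, norm_sub_rev ξ₁]
    exact norm_smul_sub_smul_le_of_norm_le hΓ hp.le hp2.le hder hG1 hG2 hξ₀ hle

/-- Growth estimate for `A_{p,ε}` when `1 < p < 2`, away from the joint origin: there
exists `C > 0`, depending only on `p`, such that for every `g` satisfying (G1)–(G3),
every `ε ∈ (0,1)`, and all `(ξ₀, ξ₁) ≠ (0, 0)`,
`|A_{p,ε}(ξ₁) − A_{p,ε}(ξ₀)| ≤ C Γ max{|ξ₀|, |ξ₁|}^{p−2} |ξ₁ − ξ₀|`. -/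
theorem stmt_12 (k : ℕ) (hk : 1 ≤ k) (p : ℝ) (hp : 1 < p) (hp2 : p < 2) :
    ∃ C : ℝ, 0 < C ∧
      ∀ γ Γ : ℝ, 0 < γ → γ ≤ Γ →
      ∀ g g' g'' : ℝ → ℝ,
        (∀ σ : ℝ, 0 < σ → HasDerivAt g (g' σ) σ) →
        (∀ σ : ℝ, 0 < σ → HasDerivAt g' (g'' σ) σ) →
        ContinuousOn g'' (Set.Ioi 0) →
        (∀ σ : ℝ, 0 < σ → |g' σ| ≤ Γ * σ ^ (p / 2 - 1)) →
        (∀ σ : ℝ, 0 < σ → |g'' σ| ≤ Γ * σ ^ (p / 2 - 2)) →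
        (∀ σ : ℝ, 0 ≤ σ → ∀ τ : ℝ, 0 < τ → τ < 1 →
          γ * (σ + τ) ^ (p / 2 - 1) ≤ g' (σ + τ) + 2 * σ * min (g'' (σ + τ)) 0) →
        ∀ ε : ℝ, 0 < ε → ε < 1 →
        ∀ ξ₀ ξ₁ : EuclideanSpace ℝ (Fin k), ¬(ξ₀ = 0 ∧ ξ₁ = 0) →
          ‖g' (ε ^ 2 + ‖ξ₁‖ ^ 2) • ξ₁ - g' (ε ^ 2 + ‖ξ₀‖ ^ 2) • ξ₀‖
            ≤ C * Γ * (max ‖ξ₀‖ ‖ξ₁‖) ^ (p - 2) * ‖ξ₁ - ξ₀‖ :=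
  stmt_12_general k p hp hp2
end

section
/- Let (a_m)_{m≥0} be a sequence of positive real numbers, and suppose there are constants C, ς ∈ (0,∞) and B ∈ (1,∞) such that a_{m+1} ≤ C·B^m·a_m^{1+ς} for all m ≥ 0. If a₀ ≤ C^{−1/ς}·B^{−1/ς²}, then a_m → 0 as m → ∞. -/
/-!
With `r = B^{-1/ς} < 1` and `D = C^{-1/ς} B^{-1/ς²}` one has `C D^ς = r` and `B r^ς = 1`,
and these two identities make the geometric bound `a_m ≤ D r^m` propagate through the
recursion: `C B^m (D r^m)^{1+ς} = (C D^ς) (B r^ς)^m D r^m = D r^{m+1}`. The hypothesis on `a₀`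
is the case `m = 0`.
-/

open Real Filter

theorem le_mul_pow_of_succ_le_mul_pow_mul_rpow {a : ℕ → ℝ} {C ς B r D : ℝ} (ha : ∀ m, 0 ≤ a m)
    (hC : 0 ≤ C) (hς : 0 ≤ ς) (hB : 0 ≤ B) (hr : 0 ≤ r) (hD : 0 ≤ D)
    (hCD : C * D ^ ς ≤ r) (hBr : B * r ^ ς ≤ 1)
    (hrec : ∀ m : ℕ, a (m + 1) ≤ C * B ^ m * a m ^ (1 + ς)) (h0 : a 0 ≤ D) :
    ∀ m : ℕ, a m ≤ D * r ^ m := by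
  intro m
  induction m with
  | zero => simpa using h0
  | succ m ih =>
    have hDr : 0 ≤ D * r ^ m := by positivity
    calc a (m + 1) ≤ C * B ^ m * a m ^ (1 + ς) := hrec m
      _ ≤ C * B ^ m * (D * r ^ m) ^ (1 + ς) := by gcongr; exact ha m
      _ = (C * D ^ ς) * (B * r ^ ς) ^ m * (D * r ^ m) := by
        rw [rpow_one_add' hDr (by positivity), mul_rpow hD (by positivity),
          ← rpow_pow_comm hr]
        ring
      _ ≤ r * 1 ^ m * (D * r ^ m) := by gcongr
      _ = D * r ^ (m + 1) := by ring

/-- Geometric convergence lemma: if a positive sequence satisfies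
`a_{m+1} ≤ C B^m a_m^{1+ς}` with `C, ς > 0` and `B > 1`, and if
`a₀ ≤ C^{−1/ς} B^{−1/ς²}`, then `a_m → 0`. -/
theorem stmt_19 (a : ℕ → ℝ) (ha : ∀ m, 0 < a m) (C ς B : ℝ)
    (hC : 0 < C) (hς : 0 < ς) (hB : 1 < B)
    (hrec : ∀ m : ℕ, a (m + 1) ≤ C * B ^ m * a m ^ (1 + ς))
    (h0 : a 0 ≤ C ^ (-(1 / ς)) * B ^ (-(1 / ς ^ 2))) :
    Tendsto a atTop (nhds 0) := by
  have hB0 : 0 < B := one_pos.trans hB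
  set r := B ^ (-(1 / ς))
  set D := C ^ (-(1 / ς)) * B ^ (-(1 / ς ^ 2))
  have hr1 : r < 1 := rpow_lt_one_of_one_lt_of_neg hB (by simpa using hς)
  have hBr : B * r ^ ς = 1 := by
    rw [← rpow_mul hB0.le, neg_mul, one_div_mul_cancel hς.ne', rpow_neg_one,
      mul_inv_cancel₀ hB0.ne']
  have hCD : C * D ^ ς = r := by
    rw [mul_rpow (by positivity) (by positivity), ← rpow_mul hC.le, ← rpow_mul hB0.le,
      neg_mul, one_div_mul_cancel hς.ne', rpow_neg_one, ← mul_assoc, mul_inv_cancel₀ hC.ne',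
      one_mul]
    congr 2
    field_simp
  have hbound := le_mul_pow_of_succ_le_mul_pow_mul_rpow (fun m => (ha m).le) hC.le hς.le hB0.le
    (by positivity) (by positivity) hCD.le hBr.le hrec h0
  have hgeom : Tendsto (fun m : ℕ => D * r ^ m) atTop (nhds 0) := by
    simpa using (tendsto_pow_atTop_nhds_zero_of_lt_one (by positivity) hr1).const_mul D
  exact squeeze_zero (fun m => (ha m).le) hbound hgeom
end
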